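/- arXiv:2504.19132 — 10 statements merged into one kernel-verified Lean document; each statement's English description precedes it below -/
import Mathlib

section
/- For 0 < s < 1, the function F3(t) = (s^2 t^3 + s^2 t^2 - s t^3 + s t^2 + 2t(1-t)^s - 2(1-t)^s - 2st - 2t + 2)/(1-t)^{s+1} satisfies lim_{t→0+} F3(t) = 0, and consequently F3(t) < 0 for all t in (0,1). -/
open Real Set Filter

/-!
Writing `u = 1 - t`, the terms `2 t u^s - 2 u^s` combine to `-2 u^(s+1)`, so the numerator of
`F3` equals `2 (T(t) - u^(s+1)) - s(1-s)t³`, where `T(t) = 1 - (s+1)t + (s+1)s t²/2` is the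
second-order Taylor polynomial of `u^(s+1)` at `t = 0`. The difference `u^(s+1) - T(t)` vanishes
at `0` and has derivative `(s+1)(1 - s t - u^s)`, which is nonnegative by Bernoulli's inequality
`u^s ≤ 1 - s t` for `0 ≤ s ≤ 1`. Hence the numerator is at most `-s(1-s)t³ < 0`, while the
denominator is positive.
-/

noncomputable def F3 (s t : ℝ) : ℝ :=
  (s^2*t^3 + s^2*t^2 - s*t^3 + s*t^2 + 2*t*(1-t)^s - 2*(1-t)^s - 2*s*t - 2*t + 2)
    / (1-t)^(s+1)

lemma one_sub_rpow_le_one_sub_mul {s x : ℝ} (hs0 : 0 ≤ s) (hs1 : s ≤ 1) (hx : x ≤ 1) :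
    (1 - x) ^ s ≤ 1 - s * x := by
  simpa [sub_eq_add_neg, mul_comm] using
    rpow_one_add_le_one_add_mul_self (s := -x) (by linarith) hs0 hs1

lemma hasDerivAt_one_sub_rpow_add_one_sub_taylor (s : ℝ) {x : ℝ} (hx : x < 1) :
    HasDerivAt (fun t => (1 - t) ^ (s + 1) - (1 - (s + 1) * t + (s + 1) * s * t ^ 2 / 2))
      ((s + 1) * (1 - s * x - (1 - x) ^ s)) x := by
  have hpow : HasDerivAt (fun t : ℝ => (1 - t) ^ (s + 1)) (-1 * (s + 1) * (1 - x) ^ s) x := by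
    simpa using ((hasDerivAt_id' x).const_sub 1).rpow_const (p := s + 1) (Or.inl (by linarith))
  have hpoly : HasDerivAt (fun t : ℝ => 1 - (s + 1) * t + (s + 1) * s * t ^ 2 / 2)
      (0 - (s + 1) * 1 + (s + 1) * s * (2 * x ^ 1) / 2) x :=
    ((hasDerivAt_const x 1).sub ((hasDerivAt_id x).const_mul (s + 1))).add
      (((hasDerivAt_pow 2 x).const_mul ((s + 1) * s)).div_const 2)
  exact (hpow.sub hpoly).congr_deriv (by ring)

lemma taylor_le_one_sub_rpow_add_one {s t : ℝ} (hs0 : 0 ≤ s) (hs1 : s ≤ 1)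
    (ht : t ∈ Icc 0 1) :
    1 - (s + 1) * t + (s + 1) * s * t ^ 2 / 2 ≤ (1 - t) ^ (s + 1) := by
  set g : ℝ → ℝ := fun t => (1 - t) ^ (s + 1) - (1 - (s + 1) * t + (s + 1) * s * t ^ 2 / 2)
  have hcont : ContinuousOn g (Icc 0 1) := by
    refine ContinuousOn.sub ?_ (by fun_prop)
    exact (continuous_const.sub continuous_id).continuousOn.rpow_const
      fun _ _ => Or.inr (by linarith)
  have hmono : MonotoneOn g (Icc 0 1) := by
    refine monotoneOn_of_hasDerivWithinAt_nonneg
      (f' := fun x => (s + 1) * (1 - s * x - (1 - x) ^ s)) (convex_Icc 0 1) hcont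
      (fun x hx => ?_) (fun x hx => ?_)
    all_goals rw [interior_Icc] at hx
    · exact (hasDerivAt_one_sub_rpow_add_one_sub_taylor s hx.2).hasDerivWithinAt
    · have hbern := one_sub_rpow_le_one_sub_mul hs0 hs1 hx.2.le
      exact mul_nonneg (by linarith) (by linarith)
  simpa [g, sub_nonneg] using hmono (left_mem_Icc.2 zero_le_one) ht ht.1

lemma F3_numerator_eq (s : ℝ) {t : ℝ} (ht : t < 1) :
    s^2*t^3 + s^2*t^2 - s*t^3 + s*t^2 + 2*t*(1-t)^s - 2*(1-t)^s - 2*s*t - 2*t + 2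
      = 2 * (1 - (s + 1) * t + (s + 1) * s * t ^ 2 / 2 - (1 - t) ^ (s + 1))
        - s * (1 - s) * t ^ 3 := by
  rw [rpow_add (by linarith), rpow_one]
  ring

lemma tendsto_F3_nhdsGT_zero (s : ℝ) : Tendsto (F3 s) (nhdsWithin 0 (Ioi 0)) (nhds 0) := by
  have hcont : ContinuousAt (F3 s) 0 := by
    have hbase : ContinuousAt (fun t : ℝ => 1 - t) 0 := by fun_prop
    have h1 := hbase.rpow_const (p := s) (by norm_num)
    have h2 := hbase.rpow_const (p := s + 1) (by norm_num)
    exact ContinuousAt.div (by fun_prop) h2 (by norm_num)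
  simpa [F3] using hcont.tendsto.mono_left nhdsWithin_le_nhds

lemma F3_neg {s t : ℝ} (hs0 : 0 < s) (hs1 : s < 1) (ht : t ∈ Ioo 0 1) : F3 s t < 0 := by
  obtain ⟨ht0, ht1⟩ := ht
  refine div_neg_of_neg_of_pos ?_ (rpow_pos_of_pos (by linarith) _)
  have htaylor := taylor_le_one_sub_rpow_add_one hs0.le hs1.le ⟨ht0.le, ht1.le⟩
  have hcube : 0 < s * (1 - s) * t ^ 3 := mul_pos (mul_pos hs0 (by linarith)) (pow_pos ht0 3)
  rw [F3_numerator_eq s ht1]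
  linarith

theorem stmt1 (s : ℝ) (hs0 : 0 < s) (hs1 : s < 1) :
    Tendsto (fun t : ℝ =>
        (s^2*t^3 + s^2*t^2 - s*t^3 + s*t^2 + 2*t*(1-t)^s - 2*(1-t)^s - 2*s*t - 2*t + 2)
          / (1-t)^(s+1)) (nhdsWithin 0 (Ioi 0)) (nhds 0) ∧
    ∀ t ∈ Ioo (0:ℝ) 1,
      (s^2*t^3 + s^2*t^2 - s*t^3 + s*t^2 + 2*t*(1-t)^s - 2*(1-t)^s - 2*s*t - 2*t + 2)
          / (1-t)^(s+1) < 0 :=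
  ⟨tendsto_F3_nhdsGT_zero s, fun _ ht => F3_neg hs0 hs1 ht⟩
end

section
/- For 0 < s < 1, the function F2(t) = s(1+t) + ((1-t^2)/t)((1-t)^{-s} - 1) is strictly concave on (0,1): its second derivative F2''(t) = (s^2 t^3 + s^2 t^2 - s t^3 + s t^2 + 2t(1-t)^s - 2(1-t)^s - 2st - 2t + 2)/((1-t)^{s+1} t^3) is nonpositive for all t in (0,1). -/
/-! The numerator `F2.num` of `F2''` vanishes at `t = 0`, and so do its first two derivatives,
while its third derivative `2s(s-1)(3 + (s+1)(1-t)^(s-2))` is negative for `0 < s < 1`.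
Going back up three times from `t = 0` gives `F2.num < 0` on `(0,1)`, and the denominator
`(1-t)^(s+1) t^3` is positive there. -/

open Real Set

lemma hasDerivAt_one_sub_rpow (p : ℝ) {x : ℝ} (hx : x < 1) :
    HasDerivAt (fun t : ℝ => (1 - t) ^ p) (-p * (1 - x) ^ (p - 1)) x := by
  simpa using ((hasDerivAt_id x).const_sub 1).rpow_const (p := p) (Or.inl (sub_ne_zero.2 hx.ne'))

lemma neg_of_hasDerivAt_neg_of_left_eq_zero {g g' : ℝ → ℝ} {a b : ℝ}
    (hg : ∀ x ∈ Ico a b, HasDerivAt g (g' x) x) (hg' : ∀ x ∈ Ioo a b, g' x < 0)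
    (ha : g a = 0) : ∀ x ∈ Ioo a b, g x < 0 := by
  intro x hx
  have hanti : StrictAntiOn g (Ico a b) := by
    refine strictAntiOn_of_deriv_neg (convex_Ico a b)
      (fun y hy => (hg y hy).continuousAt.continuousWithinAt) fun y hy => ?_
    rw [interior_Ico] at hy
    rw [(hg y (Ioo_subset_Ico_self hy)).deriv]
    exact hg' y hy
  simpa [ha] using hanti ⟨le_rfl, hx.1.trans hx.2⟩ (Ioo_subset_Ico_self hx) hx.1

noncomputable section

variable (s : ℝ)

def F2 (t : ℝ) : ℝ := s * (1 + t) + ((1 - t ^ 2) / t) * ((1 - t) ^ (-s) - 1)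

def F2' (t : ℝ) : ℝ :=
  s + ((-t ^ 2 - 1) / t ^ 2) * ((1 - t) ^ (-s) - 1) + ((1 - t ^ 2) / t) * (s * (1 - t) ^ (-s - 1))

namespace F2

def num (t : ℝ) : ℝ :=
  s^2*t^3 + s^2*t^2 - s*t^3 + s*t^2 + 2*t*(1-t)^s - 2*(1-t)^s - 2*s*t - 2*t + 2

def num' (t : ℝ) : ℝ :=
  3*s^2*t^2 + 2*s^2*t - 3*s*t^2 + 2*s*t - 2*s - 2 + 2*(s+1)*(1-t)^s

def num'' (t : ℝ) : ℝ :=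
  6*s^2*t + 2*s^2 - 6*s*t + 2*s - 2*s*(s+1)*(1-t)^(s-1)

end F2

open F2

variable {s}

lemma hasDerivAt_F2 {x : ℝ} (hx0 : x ≠ 0) (hx1 : x < 1) : HasDerivAt (F2 s) (F2' s x) x := by
  have h : HasDerivAt (F2 s) _ x := ((((hasDerivAt_id x).const_add 1).const_mul s).add
    ((((hasDerivAt_pow 2 x).const_sub 1).div (hasDerivAt_id x) hx0).mul
      ((hasDerivAt_one_sub_rpow (-s) hx1).sub_const 1)))
  convert h using 1
  simp only [F2', Pi.div_apply, id_eq, Nat.cast_ofNat]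
  field_simp
  ring

lemma hasDerivAt_F2' {x : ℝ} (hx0 : x ≠ 0) (hx1 : x < 1) :
    HasDerivAt (F2' s) (num s x / ((1 - x) ^ (s + 1) * x ^ 3)) x := by
  have hu : 0 < 1 - x := sub_pos.2 hx1
  have h : HasDerivAt (F2' s) _ x :=
    ((((((hasDerivAt_pow 2 x).neg.sub_const 1).div (hasDerivAt_pow 2 x) (pow_ne_zero 2 hx0)).mul
      ((hasDerivAt_one_sub_rpow (-s) hx1).sub_const 1)).const_add s).add
    ((((hasDerivAt_pow 2 x).const_sub 1).div (hasDerivAt_id x) hx0).mul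
      ((hasDerivAt_one_sub_rpow (-s - 1) hx1).const_mul s)))
  convert h using 1
  -- rewrite every power of `1 - x` through `(1 - x) ^ s`, so that `field_simp` sees a single atom
  have e1 : (1-x)^(-s) = ((1-x)^s)⁻¹ := rpow_neg hu.le s
  have e2 : (1-x)^(-s-1) = ((1-x)^s * (1-x))⁻¹ := by
    rw [show -s-1 = -(s+1) by ring, rpow_neg hu.le, rpow_add hu, rpow_one]
  have e3 : (1-x)^(-s-1-1) = ((1-x)^s * (1-x) * (1-x))⁻¹ := by
    rw [show -s-1-1 = -(s+1+1) by ring, rpow_neg hu.le, rpow_add hu, rpow_add hu, rpow_one]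
  have e4 : (1-x)^(s+1) = (1-x)^s * (1-x) := by rw [rpow_add hu, rpow_one]
  have : (1-x)^s ≠ 0 := (rpow_pos_of_pos hu s).ne'
  simp only [num, Pi.div_apply, Pi.neg_apply, id_eq, Nat.cast_ofNat, e1, e2, e3, e4]
  field_simp
  ring

lemma hasDerivAt_num {x : ℝ} (hx : x < 1) : HasDerivAt (num s) (num' s x) x := by
  have hA := hasDerivAt_one_sub_rpow s hx
  have h : HasDerivAt (num s) _ x :=
    ((((((((((hasDerivAt_pow 3 x).const_mul (s^2)).add ((hasDerivAt_pow 2 x).const_mul (s^2))).sub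
      ((hasDerivAt_pow 3 x).const_mul s)).add ((hasDerivAt_pow 2 x).const_mul s)).add
      (((hasDerivAt_id' x).const_mul 2).mul hA)).sub (hA.const_mul 2)).sub
      ((hasDerivAt_id' x).const_mul (2*s))).sub ((hasDerivAt_id' x).const_mul 2)).add_const 2)
  convert h using 1
  have e : (1 - x) ^ s = (1 - x) * (1 - x) ^ (s - 1) := by
    rw [mul_comm, ← rpow_add_one (sub_ne_zero.2 hx.ne'), sub_add_cancel]
  simp only [num', Nat.cast_ofNat]
  rw [e]
  ring

lemma hasDerivAt_num' {x : ℝ} (hx : x < 1) : HasDerivAt (num' s) (num'' s x) x := by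
  have h : HasDerivAt (num' s) _ x :=
    ((((((((hasDerivAt_pow 2 x).const_mul (3*s^2)).add ((hasDerivAt_id' x).const_mul (2*s^2))).sub
      ((hasDerivAt_pow 2 x).const_mul (3*s))).add ((hasDerivAt_id' x).const_mul (2*s))).sub_const
      (2*s)).sub_const 2).add ((hasDerivAt_one_sub_rpow s hx).const_mul (2*(s+1))))
  convert h using 1
  simp only [num'', Nat.cast_ofNat]
  ring

lemma hasDerivAt_num'' {x : ℝ} (hx : x < 1) :
    HasDerivAt (num'' s) (2*s*(s-1)*(3 + (s+1)*(1-x)^(s-1-1))) x := by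
  have h : HasDerivAt (num'' s) _ x :=
    ((((((hasDerivAt_id' x).const_mul (6*s^2)).add_const (2*s^2)).sub
      ((hasDerivAt_id' x).const_mul (6*s))).add_const (2*s)).sub
      ((hasDerivAt_one_sub_rpow (s-1) hx).const_mul (2*s*(s+1))))
  convert h using 1
  ring

lemma num''_neg (hs0 : 0 < s) (hs1 : s < 1) : ∀ x ∈ Ioo (0:ℝ) 1, num'' s x < 0 :=
  neg_of_hasDerivAt_neg_of_left_eq_zero (fun _ hx => hasDerivAt_num'' hx.2)
    (fun x hx => by
      have : 0 < (1 - x) ^ (s - 1 - 1) := rpow_pos_of_pos (sub_pos.2 hx.2) _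
      exact mul_neg_of_neg_of_pos (mul_neg_of_pos_of_neg (by positivity) (by linarith))
        (by positivity))
    (by simp only [num'']; norm_num; ring)

lemma num'_neg (hs0 : 0 < s) (hs1 : s < 1) : ∀ x ∈ Ioo (0:ℝ) 1, num' s x < 0 :=
  neg_of_hasDerivAt_neg_of_left_eq_zero (fun _ hx => hasDerivAt_num' hx.2)
    (num''_neg hs0 hs1) (by simp only [num']; norm_num; ring)

lemma num_neg (hs0 : 0 < s) (hs1 : s < 1) : ∀ x ∈ Ioo (0:ℝ) 1, num s x < 0 :=
  neg_of_hasDerivAt_neg_of_left_eq_zero (fun _ hx => hasDerivAt_num hx.2)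
    (num'_neg hs0 hs1) (by simp only [num]; norm_num)

lemma deriv_deriv_F2 {t : ℝ} (ht : t ∈ Ioo (0:ℝ) 1) :
    deriv (deriv (F2 s)) t = num s t / ((1 - t) ^ (s + 1) * t ^ 3) := by
  have hev : deriv (F2 s) =ᶠ[nhds t] F2' s := by
    filter_upwards [Ioo_mem_nhds ht.1 ht.2] with x hx
    exact (hasDerivAt_F2 hx.1.ne' hx.2).deriv
  rw [hev.deriv_eq]
  exact (hasDerivAt_F2' ht.1.ne' ht.2).deriv

end

theorem stmt2 (s : ℝ) (hs0 : 0 < s) (hs1 : s < 1) :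
    StrictConcaveOn ℝ (Ioo (0:ℝ) 1)
      (fun t : ℝ => s*(1+t) + ((1-t^2)/t) * ((1-t)^(-s) - 1)) ∧
    ∀ t ∈ Ioo (0:ℝ) 1,
      deriv (deriv (fun t : ℝ => s*(1+t) + ((1-t^2)/t) * ((1-t)^(-s) - 1))) t
        = (s^2*t^3 + s^2*t^2 - s*t^3 + s*t^2 + 2*t*(1-t)^s - 2*(1-t)^s - 2*s*t - 2*t + 2)
            / ((1-t)^(s+1) * t^3) ∧
      (s^2*t^3 + s^2*t^2 - s*t^3 + s*t^2 + 2*t*(1-t)^s - 2*(1-t)^s - 2*s*t - 2*t + 2)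
            / ((1-t)^(s+1) * t^3) ≤ 0 := by
  have hquot : ∀ t ∈ Ioo (0:ℝ) 1, F2.num s t / ((1 - t) ^ (s + 1) * t ^ 3) < 0 := fun t ht =>
    div_neg_of_neg_of_pos (num_neg hs0 hs1 t ht)
      (mul_pos (rpow_pos_of_pos (sub_pos.2 ht.2) _) (pow_pos ht.1 3))
  exact ⟨strictConcaveOn_of_deriv2_neg' (convex_Ioo 0 1)
    (fun t ht => (hasDerivAt_F2 ht.1.ne' ht.2).continuousAt.continuousWithinAt)
    (fun t ht => (deriv_deriv_F2 ht).trans_lt (hquot t ht)),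
    fun t ht => ⟨deriv_deriv_F2 ht, (hquot t ht).le⟩⟩
end

section
/- For 0 < s < 1, the equation (1-t)^{-s}(s t^2 (1-t)^s + t^2 (1-t)^s + s t^2 + (1-t)^s + s t - t^2 - 1)/t^2 = 0 has a unique root t_s in the interval (0,1). -/
/-! Up to the factor `-1/t²` the left-hand side is `k(t)`, where `k(0) = 0`,
`k(t) → ∞` as `t → 1⁻`, and `k'(t) = t·m(t)` with `m` strictly increasing from `m(0) < 0`
to `+∞`. Hence `k` strictly decreases and then strictly increases on `(0, 1)`, so it has
exactly one zero there. -/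

open Real Set Filter Topology

section SignChange

variable {a b c : ℝ}

lemma exists_mem_Ioo_pos_of_tendsto_atTop {f : ℝ → ℝ} (hab : a < b)
    (htop : Tendsto f (𝓝[<] b) atTop) : ∃ x ∈ Ioo a b, 0 < f x :=
  ((show ∀ᶠ x in 𝓝[<] b, x ∈ Ioo a b from Ioo_mem_nhdsLT hab).and
    (htop.eventually_gt_atTop 0)).exists

lemma exists_sign_change_of_hasDerivAt_pos {m m' : ℝ → ℝ} (hab : a < b)
    (hm : ∀ x ∈ Ico a b, HasDerivAt m (m' x) x) (hm' : ∀ x ∈ Ioo a b, 0 < m' x)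
    (ha : m a < 0) (htop : Tendsto m (𝓝[<] b) atTop) :
    ∃ c ∈ Ioo a b, (∀ x ∈ Ioo a c, m x < 0) ∧ ∀ x ∈ Ioo c b, 0 < m x := by
  have hcont : ContinuousOn m (Ico a b) := fun x hx =>
    (hm x hx).continuousAt.continuousWithinAt
  have hmono : StrictMonoOn m (Ico a b) :=
    strictMonoOn_of_hasDerivWithinAt_pos (convex_Ico a b) hcont
      (fun x hx => by
        rw [interior_Ico] at hx ⊢; exact (hm x (Ioo_subset_Ico_self hx)).hasDerivWithinAt)
      (fun x hx => by rw [interior_Ico] at hx; exact hm' x hx)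
  obtain ⟨x, hx, hmx⟩ := exists_mem_Ioo_pos_of_tendsto_atTop hab htop
  obtain ⟨c, hc, hmc⟩ := intermediate_value_Icc hx.1.le
    (hcont.mono (Icc_subset_Ico_right hx.2)) ⟨ha.le, hmx.le⟩
  have hac : a < c := hc.1.lt_of_ne (by rintro rfl; exact ha.ne hmc)
  have hcb : c < b := hc.2.trans_lt hx.2
  refine ⟨c, ⟨hac, hcb⟩, fun y hy => ?_, fun y hy => ?_⟩
  · exact hmc ▸ hmono ⟨hy.1.le, hy.2.trans hcb⟩ ⟨hac.le, hcb⟩ hy.2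
  · exact hmc ▸ hmono ⟨hac.le, hcb⟩ ⟨hac.le.trans hy.1.le, hy.2⟩ hy.1

lemma existsUnique_zero_of_hasDerivAt_neg_pos {f f' : ℝ → ℝ} (hc : c ∈ Ioo a b)
    (hf : ∀ x ∈ Ico a b, HasDerivAt f (f' x) x) (hneg : ∀ x ∈ Ioo a c, f' x < 0)
    (hpos : ∀ x ∈ Ioo c b, 0 < f' x) (ha : f a = 0) (htop : Tendsto f (𝓝[<] b) atTop) :
    ∃! x, x ∈ Ioo a b ∧ f x = 0 := by
  have hcont : ContinuousOn f (Ico a b) := fun x hx =>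
    (hf x hx).continuousAt.continuousWithinAt
  have hanti : StrictAntiOn f (Icc a c) :=
    strictAntiOn_of_hasDerivWithinAt_neg (convex_Icc a c)
      (hcont.mono (Icc_subset_Ico_right hc.2))
      (fun x hx => by
        rw [interior_Icc] at hx ⊢; exact (hf x ⟨hx.1.le, hx.2.trans hc.2⟩).hasDerivWithinAt)
      (fun x hx => by rw [interior_Icc] at hx; exact hneg x hx)
  have hmono : StrictMonoOn f (Ico c b) :=
    strictMonoOn_of_hasDerivWithinAt_pos (convex_Ico c b)
      (hcont.mono (Ico_subset_Ico_left hc.1.le))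
      (fun x hx => by
        rw [interior_Ico] at hx ⊢
        exact (hf x ⟨(hc.1.trans hx.1).le, hx.2⟩).hasDerivWithinAt)
      (fun x hx => by rw [interior_Ico] at hx; exact hpos x hx)
  have hf_neg : ∀ x ∈ Ioc a c, f x < 0 := fun x hx =>
    ha ▸ hanti ⟨le_rfl, hc.1.le⟩ ⟨hx.1.le, hx.2⟩ hx.1
  have hfc := hf_neg c ⟨hc.1, le_rfl⟩
  have hzero_gt : ∀ y ∈ Ioo a b, f y = 0 → c < y := fun y hy hfy =>
    not_le.mp fun h => (hf_neg y ⟨hy.1, h⟩).ne hfy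
  obtain ⟨x, hx, hfx⟩ := exists_mem_Ioo_pos_of_tendsto_atTop hc.2 htop
  obtain ⟨r, hr, hfr⟩ := intermediate_value_Icc hx.1.le
    (hcont.mono ((Icc_subset_Ico_right hx.2).trans (Ico_subset_Ico_left hc.1.le)))
    ⟨hfc.le, hfx.le⟩
  have hcr : c < r := hr.1.lt_of_ne (by rintro rfl; exact hfc.ne hfr)
  have hrb : r < b := hr.2.trans_lt hx.2
  refine ⟨r, ⟨⟨hc.1.trans hcr, hrb⟩, hfr⟩, fun y ⟨hy, hfy⟩ => ?_⟩
  exact hmono.injOn ⟨(hzero_gt y hy hfy).le, hy.2⟩ ⟨hcr.le, hrb⟩ (hfy.trans hfr.symm)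

end SignChange

lemma tendsto_one_sub_rpow_neg_mul_atTop {p L : ℝ} {g : ℝ → ℝ} (hp : 0 < p) (hL : 0 < L)
    (hg : Tendsto g (𝓝[<] 1) (𝓝 L)) :
    Tendsto (fun t => (1 - t) ^ (-p) * g t) (𝓝[<] 1) atTop := by
  have h : Tendsto (fun t : ℝ => 1 - t) (𝓝[<] 1) (𝓝[>] 0) := by
    refine tendsto_nhdsWithin_iff.mpr ⟨?_, ?_⟩
    · exact ((continuous_sub_left 1).tendsto' 1 0 (sub_self 1)).mono_left nhdsWithin_le_nhds
    · filter_upwards [self_mem_nhdsWithin] with t ht using sub_pos.mpr (mem_Iio.mp ht)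
  exact ((tendsto_rpow_neg_nhdsGT_zero (neg_neg_of_pos hp)).comp h).atTop_mul_pos hL hg

namespace UniqueRoot

variable {s t : ℝ}

noncomputable def k (s t : ℝ) : ℝ :=
  (1 - t) ^ (-s) * (1 + t ^ 2 - s * t - s * t ^ 2) - 1 - (1 + s) * t ^ 2

noncomputable def m (s t : ℝ) : ℝ :=
  (1 - s) * ((2 + s) - (2 - s) * t) * (1 - t) ^ (-s - 1) - 2 * (1 + s)

lemma hasDerivAt_k (s : ℝ) (ht : t < 1) : HasDerivAt (k s) (t * m s t) t := by
  have h0 : 1 - t ≠ 0 := sub_ne_zero.mpr ht.ne'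
  have hpow := ((hasDerivAt_id t).const_sub 1).rpow_const (p := -s) (Or.inl h0)
  have hpoly := (((hasDerivAt_pow 2 t).const_add 1).sub ((hasDerivAt_id t).const_mul s)).sub
    ((hasDerivAt_pow 2 t).const_mul s)
  have := ((hpow.mul hpoly).sub_const 1).sub ((hasDerivAt_pow 2 t).const_mul (1 + s))
  refine HasDerivAt.congr_deriv (f := k s) this ?_
  have hb : (1 - t) ^ (-s) = (1 - t) ^ (-s - 1) * (1 - t) := by
    rw [← rpow_add_one h0]; ring_nf
  simp only [id, m, hb, Pi.sub_apply]
  ring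

lemma hasDerivAt_m (s : ℝ) (ht : t < 1) :
    HasDerivAt (m s) ((1 - s) * s * ((4 + s) - (2 - s) * t) * (1 - t) ^ (-s - 2)) t := by
  have h0 : 1 - t ≠ 0 := sub_ne_zero.mpr ht.ne'
  have hpow := ((hasDerivAt_id t).const_sub 1).rpow_const (p := -s - 1) (Or.inl h0)
  have hlin := ((hasDerivAt_id t).const_mul (2 - s)).const_sub (2 + s) |>.const_mul (1 - s)
  have := (hlin.mul hpow).sub_const (2 * (1 + s))
  refine HasDerivAt.congr_deriv (f := m s) this ?_
  have hb : (1 - t) ^ (-s - 1 - 1) = (1 - t) ^ (-s - 2) := by ring_nf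
  have hb' : (1 - t) ^ (-s - 1) = (1 - t) ^ (-s - 2) * (1 - t) := by
    rw [← rpow_add_one h0]; ring_nf
  simp only [id, hb, hb']
  ring

lemma deriv_m_pos (hs0 : 0 < s) (hs1 : s < 1) (ht : t < 1) : 0 < deriv (m s) t := by
  rw [(hasDerivAt_m s ht).deriv]
  have h1 : 0 < (1 - t) ^ (-s - 2) := rpow_pos_of_pos (sub_pos.mpr ht) _
  have h2 : 0 < (4 + s) - (2 - s) * t := by nlinarith
  have h3 : 0 < (1 - s) * s := mul_pos (sub_pos.mpr hs1) hs0
  positivity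

lemma k_zero (s : ℝ) : k s 0 = 0 := by
  simp [k]

lemma m_zero_neg (hs0 : 0 < s) : m s 0 < 0 := by
  simp only [m, mul_zero, sub_zero, one_rpow]
  nlinarith

lemma tendsto_k_atTop (hs0 : 0 < s) (hs1 : s < 1) : Tendsto (k s) (𝓝[<] 1) atTop := by
  have hg : Tendsto (fun t : ℝ => 1 + t ^ 2 - s * t - s * t ^ 2) (𝓝[<] 1) (𝓝 (2 - 2 * s)) :=
    ((by fun_prop : Continuous fun t : ℝ => 1 + t ^ 2 - s * t - s * t ^ 2).tendsto' 1 _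
      (by ring)).mono_left nhdsWithin_le_nhds
  have hq : Tendsto (fun t : ℝ => -1 - (1 + s) * t ^ 2) (𝓝[<] 1) (𝓝 (-2 - s)) :=
    ((by fun_prop : Continuous fun t : ℝ => -1 - (1 + s) * t ^ 2).tendsto' 1 _
      (by ring)).mono_left nhdsWithin_le_nhds
  refine ((tendsto_one_sub_rpow_neg_mul_atTop hs0 (by linarith) hg).atTop_add hq).congr fun t => ?_
  simp only [k]
  ring

lemma tendsto_m_atTop (hs0 : 0 < s) (hs1 : s < 1) : Tendsto (m s) (𝓝[<] 1) atTop := by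
  have hg : Tendsto (fun t : ℝ => (1 - s) * ((2 + s) - (2 - s) * t)) (𝓝[<] 1)
      (𝓝 ((1 - s) * (2 * s))) :=
    ((by fun_prop : Continuous fun t : ℝ => (1 - s) * ((2 + s) - (2 - s) * t)).tendsto' 1 _
      (by ring)).mono_left nhdsWithin_le_nhds
  have hL : 0 < (1 - s) * (2 * s) := by nlinarith
  refine ((tendsto_one_sub_rpow_neg_mul_atTop (by linarith : 0 < s + 1) hL hg).atTop_add
    (tendsto_const_nhds (x := -(2 * (1 + s))))).congr fun t => ?_
  simp only [m, neg_add']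
  ring

lemma expr_eq_neg_k_div_sq (s : ℝ) (ht : t < 1) :
    (1-t)^(-s) * (s*t^2*(1-t)^s + t^2*(1-t)^s + s*t^2 + (1-t)^s + s*t - t^2 - 1) / t^2
      = -k s t / t ^ 2 := by
  have hinv : (1 - t) ^ (-s) * (1 - t) ^ s = 1 := by
    rw [← rpow_add (sub_pos.mpr ht), neg_add_cancel, rpow_zero]
  congr 1
  simp only [k]
  linear_combination (s * t ^ 2 + t ^ 2 + 1) * hinv

end UniqueRoot

open UniqueRoot in
theorem stmt4 (s : ℝ) (hs0 : 0 < s) (hs1 : s < 1) :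
    ∃! t : ℝ, t ∈ Ioo (0:ℝ) 1 ∧
      (1-t)^(-s) * (s*t^2*(1-t)^s + t^2*(1-t)^s + s*t^2 + (1-t)^s + s*t - t^2 - 1) / t^2 = 0 := by
  obtain ⟨c, hc, hm_neg, hm_pos⟩ := exists_sign_change_of_hasDerivAt_pos zero_lt_one
    (fun x hx => (hasDerivAt_m s hx.2).differentiableAt.hasDerivAt)
    (fun x hx => deriv_m_pos hs0 hs1 hx.2) (m_zero_neg hs0) (tendsto_m_atTop hs0 hs1)
  have hk : ∃! t, t ∈ Ioo (0 : ℝ) 1 ∧ k s t = 0 :=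
    existsUnique_zero_of_hasDerivAt_neg_pos hc (fun x hx => hasDerivAt_k s hx.2)
      (fun x hx => mul_neg_of_pos_of_neg hx.1 (hm_neg x hx))
      (fun x hx => mul_pos (hc.1.trans hx.1) (hm_pos x hx)) (k_zero s) (tendsto_k_atTop hs0 hs1)
  refine (existsUnique_congr fun t => and_congr_right fun ht => ?_).mpr hk
  rw [expr_eq_neg_k_div_sq s ht.2, div_eq_zero_iff, neg_eq_zero,
    or_iff_left (pow_ne_zero 2 ht.1.ne')]
end

section
/- For 0 < s ≤ 1/√2, the polynomial F6(t) = 3 s^5 t^4 - 7 s^4 t^3 + 3 s^3 t^2 + 3 s^2 t + 2 s^3 - 4 s has derivative F6'(t) = 3 s^2 (1 - s t)^2 (1 + 4 s t) > 0 on [0,1), and F6(1) = -s(1-s)(3 s^3 - 4 s^2 + s + 4) < 0; hence F6(t) < 0 for all t in [0,1). -/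
/-! Since `F6' s t = 3 s² (1 - s t)² (1 + 4 s t)` is positive on `[0, 1)` whenever `0 < s < 1`,
`F6 s` is strictly increasing on `[0, 1]`, so on `[0, 1)` it stays below
`F6 s 1 = -s (1 - s) (3 s³ - 4 s² + s + 4)`, which is negative because `4 - 4 s² > 0`. -/

open Real Set

def F6 (s t : ℝ) : ℝ :=
  3*s^5*t^4 - 7*s^4*t^3 + 3*s^3*t^2 + 3*s^2*t + 2*s^3 - 4*s

theorem hasDerivAt_F6 (s t : ℝ) :
    HasDerivAt (F6 s) (3*s^2*(1 - s*t)^2*(1 + 4*s*t)) t := by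
  have h := ((((((hasDerivAt_pow 4 t).const_mul (3*s^5)).fun_sub
    ((hasDerivAt_pow 3 t).const_mul (7*s^4))).fun_add
    ((hasDerivAt_pow 2 t).const_mul (3*s^3))).fun_add
    ((hasDerivAt_id' t).const_mul (3*s^2))).add_const (2*s^3)).sub_const (4*s)
  refine h.congr_deriv ?_
  norm_num
  ring

section

variable {s t : ℝ}

theorem deriv_F6_pos (hs0 : 0 < s) (hs1 : s < 1) (ht : t ∈ Ico (0:ℝ) 1) :
    0 < 3*s^2*(1 - s*t)^2*(1 + 4*s*t) := by
  obtain ⟨ht0, ht1⟩ := ht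
  have hst0 : 0 ≤ s * t := mul_nonneg hs0.le ht0
  have hst1 : s * t < 1 := by nlinarith
  have : 0 < 1 - s * t := by linarith
  positivity

theorem F6_one (s : ℝ) : F6 s 1 = -s*(1-s)*(3*s^3 - 4*s^2 + s + 4) := by
  unfold F6; ring

theorem F6_one_neg (hs0 : 0 < s) (hs1 : s < 1) : -s*(1-s)*(3*s^3 - 4*s^2 + s + 4) < 0 := by
  have hcubic : 0 < 3*s^3 - 4*s^2 + s + 4 := by nlinarith [pow_pos hs0 3]
  have : 0 < s * (1 - s) * (3*s^3 - 4*s^2 + s + 4) := by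
    have : 0 < 1 - s := by linarith
    positivity
  linarith

theorem strictMonoOn_F6 (hs0 : 0 < s) (hs1 : s < 1) : StrictMonoOn (F6 s) (Icc 0 1) := by
  refine strictMonoOn_of_deriv_pos (convex_Icc 0 1) (by unfold F6; fun_prop) fun x hx => ?_
  rw [interior_Icc] at hx
  rw [(hasDerivAt_F6 s x).deriv]
  exact deriv_F6_pos hs0 hs1 (Ioo_subset_Ico_self hx)

theorem F6_neg (hs0 : 0 < s) (hs1 : s < 1) (ht : t ∈ Ico (0:ℝ) 1) : F6 s t < 0 :=
  calc F6 s t < F6 s 1 :=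
        strictMonoOn_F6 hs0 hs1 (Ico_subset_Icc_self ht) (right_mem_Icc.2 zero_le_one) ht.2
    _ < 0 := F6_one s ▸ F6_one_neg hs0 hs1

end

theorem one_div_sqrt_two_lt_one : 1 / Real.sqrt 2 < 1 := by
  rw [div_lt_one (by positivity)]
  exact Real.one_lt_sqrt_two

theorem stmt7 (s : ℝ) (hs0 : 0 < s) (hs1 : s ≤ 1 / Real.sqrt 2) :
    (∀ t ∈ Ico (0:ℝ) 1,
      HasDerivAt (fun t : ℝ => 3*s^5*t^4 - 7*s^4*t^3 + 3*s^3*t^2 + 3*s^2*t + 2*s^3 - 4*s)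
        (3*s^2*(1 - s*t)^2*(1 + 4*s*t)) t ∧
      0 < 3*s^2*(1 - s*t)^2*(1 + 4*s*t)) ∧
    3*s^5*1^4 - 7*s^4*1^3 + 3*s^3*1^2 + 3*s^2*1 + 2*s^3 - 4*s
      = -s*(1-s)*(3*s^3 - 4*s^2 + s + 4) ∧
    -s*(1-s)*(3*s^3 - 4*s^2 + s + 4) < 0 ∧
    ∀ t ∈ Ico (0:ℝ) 1, 3*s^5*t^4 - 7*s^4*t^3 + 3*s^3*t^2 + 3*s^2*t + 2*s^3 - 4*s < 0 := by
  have hs : s < 1 := hs1.trans_lt one_div_sqrt_two_lt_one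
  exact ⟨fun t ht => ⟨hasDerivAt_F6 s t, deriv_F6_pos hs0 hs ht⟩, F6_one s,
    F6_one_neg hs0 hs, fun t ht => F6_neg hs0 hs ht⟩
end

section
/- For 0 < s ≤ 1/√2, the function F5(t) = 2s(1-t^2)/(1-st) + ((1-t^2)((1+st)^2-1))/t is strictly concave on (0,1), i.e., its second derivative 2(3 s^5 t^4 - 7 s^4 t^3 + 3 s^3 t^2 + 3 s^2 t + 2 s^3 - 4 s)/(1-st)^3 is negative for all t in (0,1). -/
/-!
Writing `u = s t`, the numerator of `F₅''` factors as `2 s ((u - 1)³ (3u + 2) + 2 (s² - 1))`.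
For `0 < s < 1` and `t ∈ (0, 1)` we have `0 < u < 1`, so both summands are negative while
the denominator `(1 - u)³` is positive.
-/

open Real Set

theorem deriv_deriv_eq_of_hasDerivAt {U : Set ℝ} (hU : IsOpen U) {f f' f'' : ℝ → ℝ}
    (hf : ∀ x ∈ U, HasDerivAt f (f' x) x) (hf' : ∀ x ∈ U, HasDerivAt f' (f'' x) x)
    {x : ℝ} (hx : x ∈ U) : deriv (deriv f) x = f'' x := by
  have : deriv f =ᶠ[nhds x] f' :=
    Filter.eventuallyEq_of_mem (hU.mem_nhds hx) fun y hy => (hf y hy).deriv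
  rw [this.deriv_eq, (hf' x hx).deriv]

noncomputable section

def F5 (s t : ℝ) : ℝ := 2*s*(1-t^2)/(1-s*t) + ((1-t^2)*((1+s*t)^2 - 1))/t

def F5' (s t : ℝ) : ℝ := 2*s*(s*t^2-2*t+s)/(1-s*t)^2 + s^2 - 4*s*t - 3*s^2*t^2

def F5'' (s t : ℝ) : ℝ :=
  2*(3*s^5*t^4 - 7*s^4*t^3 + 3*s^3*t^2 + 3*s^2*t + 2*s^3 - 4*s)/(1-s*t)^3

end

theorem hasDerivAt_F5 {s t : ℝ} (hst : 1 - s*t ≠ 0) (ht : t ≠ 0) :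
    HasDerivAt (F5 s) (F5' s t) t := by
  have hsq : HasDerivAt (fun x : ℝ => 1 - x^2) (-(2*t)) t :=
    ((hasDerivAt_pow 2 t).const_sub 1).congr_deriv (by ring)
  have hlin : HasDerivAt (fun x : ℝ => 1 - s*x) (-s) t :=
    (((hasDerivAt_id t).const_mul s).const_sub 1).congr_deriv (by simp)
  have hquad : HasDerivAt (fun x : ℝ => (1 + s*x)^2 - 1) (2*(1+s*t)*s) t :=
    ((((hasDerivAt_id t).const_mul s).const_add 1).fun_pow 2).sub_const 1 |>.congr_deriv
      (by simp)
  have hsum := ((hsq.const_mul (2*s)).div hlin hst).add ((hsq.mul hquad).div (hasDerivAt_id t) ht)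
  refine hsum.congr_deriv ?_
  simp only [F5', Pi.mul_apply, id]
  field_simp
  ring

theorem hasDerivAt_F5' {s t : ℝ} (hst : 1 - s*t ≠ 0) : HasDerivAt (F5' s) (F5'' s t) t := by
  have hnum : HasDerivAt (fun x : ℝ => 2*s*(s*x^2-2*x+s)) (2*s*(s*(2*t)-2)) t :=
    ((((hasDerivAt_pow 2 t).const_mul s).sub ((hasDerivAt_id t).const_mul 2)).add_const s
      |>.const_mul (2*s)).congr_deriv (by simp)
  have hden : HasDerivAt (fun x : ℝ => (1-s*x)^2) (2*(1-s*t)*(-s)) t :=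
    ((((hasDerivAt_id t).const_mul s).const_sub 1).fun_pow 2).congr_deriv (by simp)
  have hpoly : HasDerivAt (fun x : ℝ => s^2 - 4*s*x - 3*s^2*x^2) (-(4*s) - 3*s^2*(2*t)) t :=
    ((((hasDerivAt_id t).const_mul (4*s)).const_sub (s^2)).sub
      ((hasDerivAt_pow 2 t).const_mul (3*s^2))).congr_deriv (by simp)
  have hsum := (hnum.div hden (pow_ne_zero 2 hst)).add hpoly
  refine (hsum.congr_deriv ?_).congr_of_eventuallyEq (.of_forall fun x => ?_)
  · simp only [F5'']
    field_simp
    ring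
  · simp only [F5', Pi.add_apply, Pi.div_apply]
    ring

theorem F5''_eq (s t : ℝ) :
    F5'' s t = 2*s*((s*t-1)^3*(3*s*t+2) + 2*(s^2-1))/(1-s*t)^3 := by
  simp only [F5'']; ring

theorem F5''_neg {s t : ℝ} (hs0 : 0 < s) (hs1 : s < 1) (ht : 0 ≤ t) (hst : s*t < 1) :
    F5'' s t < 0 := by
  rw [F5''_eq]
  refine div_neg_of_neg_of_pos (mul_neg_of_pos_of_neg (by positivity) ?_) (pow_pos (by linarith) 3)
  have hcube : (s*t-1)^3*(3*s*t+2) < 0 :=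
    mul_neg_of_neg_of_pos (Odd.pow_neg (by decide) (by linarith)) (by positivity)
  nlinarith

theorem stmt9 (s : ℝ) (hs0 : 0 < s) (hs1 : s ≤ 1 / Real.sqrt 2) :
    StrictConcaveOn ℝ (Ioo (0:ℝ) 1)
      (fun t : ℝ => 2*s*(1-t^2)/(1-s*t) + ((1-t^2)*((1+s*t)^2 - 1))/t) ∧
    ∀ t ∈ Ioo (0:ℝ) 1,
      deriv (deriv (fun t : ℝ => 2*s*(1-t^2)/(1-s*t) + ((1-t^2)*((1+s*t)^2 - 1))/t)) t
        = 2*(3*s^5*t^4 - 7*s^4*t^3 + 3*s^3*t^2 + 3*s^2*t + 2*s^3 - 4*s)/(1-s*t)^3 ∧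
      2*(3*s^5*t^4 - 7*s^4*t^3 + 3*s^3*t^2 + 3*s^2*t + 2*s^3 - 4*s)/(1-s*t)^3 < 0 := by
  have hs1' : s < 1 :=
    hs1.trans_lt (by rw [one_div]; exact inv_lt_one_of_one_lt₀ one_lt_sqrt_two)
  have hst : ∀ t ∈ Ioo (0:ℝ) 1, s*t < 1 := fun t ht => by nlinarith [ht.1, ht.2]
  have hF5 : ∀ t ∈ Ioo (0:ℝ) 1, HasDerivAt (F5 s) (F5' s t) t := fun t ht =>
    hasDerivAt_F5 (by linarith [hst t ht]) ht.1.ne'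
  have hF5' : ∀ t ∈ Ioo (0:ℝ) 1, HasDerivAt (F5' s) (F5'' s t) t := fun t ht =>
    hasDerivAt_F5' (by linarith [hst t ht])
  have hF5'' : ∀ t ∈ Ioo (0:ℝ) 1, deriv (deriv (F5 s)) t = F5'' s t := fun t ht =>
    deriv_deriv_eq_of_hasDerivAt isOpen_Ioo hF5 hF5' ht
  have hneg : ∀ t ∈ Ioo (0:ℝ) 1, F5'' s t < 0 := fun t ht =>
    F5''_neg hs0 hs1' ht.1.le (hst t ht)
  refine ⟨strictConcaveOn_of_deriv2_neg' (convex_Ioo 0 1)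
    (fun t ht => (hF5 t ht).continuousAt.continuousWithinAt) fun t ht => ?_,
    fun t ht => ⟨hF5'' t ht, hneg t ht⟩⟩
  rw [Function.iterate_succ_apply, Function.iterate_one]
  exact (hF5'' t ht).trans_lt (hneg t ht)
end

section
/- For 0 < s ≤ 1/√2, the quartic equation -3 s^4 t^4 + 2 s^3 t^3 + (s^4 + 7 s^2) t^2 - (2 s^3 + 8 s) t + 3 s^2 = 0 has exactly one root t_s in the interval (0,1). -/
open Real Set

/-!
Dividing the quartic by `(1 - s t)^2` gives `F5'(t) = 2 + s^2 - 4 s t - 3 s^2 t^2 - 2 (1 - s^2) / (1 - s t)^2`,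
which for `0 < s ≤ 1` is strictly decreasing on `0 ≤ t < 1/s`: the polynomial part decreases and
`(1 - s t)^2` shrinks. The quartic is `3 s^2 > 0` at `t = 0` and `-2 s (1 - s) (4 - s - s^2) < 0`
at `t = 1`, so it has a root in `(0, 1)`, and monotonicity of `F5'` makes it unique.
-/

def quartic (s t : ℝ) : ℝ :=
  -3*s^4*t^4 + 2*s^3*t^3 + (s^4 + 7*s^2)*t^2 - (2*s^3 + 8*s)*t + 3*s^2

-- The paper's `F5'`.
noncomputable def quarticQuot (s t : ℝ) : ℝ :=
  2 + s^2 - 4*s*t - 3*s^2*t^2 - 2*(1 - s^2) / (1 - s*t)^2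

section

variable {s : ℝ}

lemma quartic_eq_mul_quarticQuot {t : ℝ} (h : 1 - s*t ≠ 0) :
    quartic s t = (1 - s*t)^2 * quarticQuot s t := by
  unfold quartic quarticQuot
  field_simp
  ring

lemma quartic_zero : quartic s 0 = 3*s^2 := by
  simp [quartic]

lemma quartic_one : quartic s 1 = -2*s*(1 - s)*(4 - s - s^2) := by
  unfold quartic
  ring

lemma one_sub_mul_pos_of_mem_Ico (hs0 : 0 < s) {t : ℝ} (ht : t ∈ Ico 0 s⁻¹) : 0 < 1 - s*t := by
  have := mul_lt_mul_of_pos_left ht.2 hs0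
  rw [mul_inv_cancel₀ hs0.ne'] at this
  linarith

lemma strictAntiOn_quarticQuot (hs0 : 0 < s) (hs1 : s ≤ 1) :
    StrictAntiOn (quarticQuot s) (Ico 0 s⁻¹) := by
  intro a ha b hb hab
  have hb' := one_sub_mul_pos_of_mem_Ico hs0 hb
  have hsq : (1 - s*b)^2 < (1 - s*a)^2 := by
    have : s*a < s*b := mul_lt_mul_of_pos_left hab hs0
    nlinarith
  have hfrac : 2*(1 - s^2) / (1 - s*a)^2 ≤ 2*(1 - s^2) / (1 - s*b)^2 :=
    div_le_div_of_nonneg_left (by nlinarith) (by positivity) hsq.le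
  have hpoly : 4*s*a + 3*s^2*a^2 < 4*s*b + 3*s^2*b^2 := by
    have hba : 0 < b - a := sub_pos.2 hab
    have hab' : 0 ≤ b + a := by linarith [ha.1]
    nlinarith [mul_pos hs0 hba, mul_nonneg (sq_nonneg s) (mul_nonneg hba.le hab')]
  unfold quarticQuot
  linarith

lemma exists_quartic_eq_zero (hs0 : 0 < s) (hs1 : s < 1) : ∃ t ∈ Ioo 0 1, quartic s t = 0 := by
  have hcont : ContinuousOn (quartic s) (Icc 0 1) := by
    unfold quartic
    fun_prop
  have hsign : (0 : ℝ) ∈ Ioo (quartic s 1) (quartic s 0) := by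
    rw [quartic_zero, quartic_one]
    constructor
    · have := mul_pos hs0 (mul_pos (sub_pos.2 hs1) (by nlinarith : 0 < 4 - s - s^2))
      linarith
    · positivity
  exact intermediate_value_Ioo' zero_le_one hcont hsign

lemma eq_of_quartic_eq_zero (hs0 : 0 < s) (hs1 : s ≤ 1) {t u : ℝ}
    (ht : t ∈ Ico 0 s⁻¹) (hu : u ∈ Ico 0 s⁻¹) (hqt : quartic s t = 0) (hqu : quartic s u = 0) :
    t = u := by
  have hquot {x : ℝ} (hx : x ∈ Ico 0 s⁻¹) (hqx : quartic s x = 0) : quarticQuot s x = 0 := by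
    have hpos := one_sub_mul_pos_of_mem_Ico hs0 hx
    rw [quartic_eq_mul_quarticQuot hpos.ne'] at hqx
    exact (mul_eq_zero.1 hqx).resolve_left (by positivity)
  exact (strictAntiOn_quarticQuot hs0 hs1).injOn ht hu (by rw [hquot ht hqt, hquot hu hqu])

end

theorem stmt10 (s : ℝ) (hs0 : 0 < s) (hs1 : s ≤ 1 / Real.sqrt 2) :
    ∃! t : ℝ, t ∈ Ioo (0:ℝ) 1 ∧
      -3*s^4*t^4 + 2*s^3*t^3 + (s^4 + 7*s^2)*t^2 - (2*s^3 + 8*s)*t + 3*s^2 = 0 := by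
  have hs : s < 1 := hs1.trans_lt (by rw [div_lt_one (by positivity)]; exact one_lt_sqrt_two)
  have hIoo : Ioo (0 : ℝ) 1 ⊆ Ico 0 s⁻¹ := fun t ht =>
    ⟨ht.1.le, ht.2.trans_le ((one_le_inv₀ hs0).2 hs.le)⟩
  obtain ⟨t, ht, hqt⟩ := exists_quartic_eq_zero hs0 hs
  exact ⟨t, ⟨ht, hqt⟩, fun u ⟨hu, hqu⟩ =>
    eq_of_quartic_eq_zero hs0 hs.le (hIoo hu) (hIoo ht) hqu hqt⟩
end

section
/- For 0 < s < 1 and 0 < r < 1, the function F7(r) = (1-r)^{-s-1}(r^3 s^2 - r^3 s + r^2 s^2 + r^2 s + 2r(1-r)^s - 2(1-r)^s - 2rs - 2r + 2) has derivative F7'(r) = r^2 (s-1) s (r s - 2r + s + 4)/(1-r)^{s+2} ≤ 0, and lim_{r→0+} F7(r) = 0; hence F7(r) ≤ 0 on (0,1). -/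
/-!
Since `2 r (1-r)^s - 2 (1-r)^s = -2 (1-r)^(s+1)`, for `r < 1` the function equals
`(1-r)^(-s-1) P(r) - 2` with `P` a polynomial, which makes the derivative a direct computation.
For `0 ≤ s ≤ 1` the derivative is nonpositive on all of `r < 1`, so the function is antitone
there; it is continuous at `0`, where it vanishes.
-/

open Real Set Filter

noncomputable def f7 (s r : ℝ) : ℝ :=
  (1-r)^(-s-1) *
    (r^3*s^2 - r^3*s + r^2*s^2 + r^2*s + 2*r*(1-r)^s - 2*(1-r)^s - 2*r*s - 2*r + 2)

noncomputable def f7Deriv (s r : ℝ) : ℝ := r^2*(s-1)*s*(r*s - 2*r + s + 4)/(1-r)^(s+2)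

def f7Poly (s r : ℝ) : ℝ := r^3*s^2 - r^3*s + r^2*s^2 + r^2*s - 2*r*s - 2*r + 2

lemma rpow_neg_sub_one_mul_rpow_mul_self {x : ℝ} (hx : 0 < x) (s : ℝ) :
    x ^ (-s-1) * x ^ s * x = 1 := by
  rw [← rpow_add hx, ← rpow_add_one hx.ne', show -s-1+s+1 = (0:ℝ) by ring, rpow_zero]

lemma f7_eq_of_lt_one (s : ℝ) {r : ℝ} (hr : r < 1) :
    f7 s r = (1-r)^(-s-1) * f7Poly s r - 2 := by
  unfold f7 f7Poly
  linear_combination (-2 : ℝ) * rpow_neg_sub_one_mul_rpow_mul_self (sub_pos.2 hr) s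

lemma hasDerivAt_f7Poly (s r : ℝ) :
    HasDerivAt (f7Poly s) (3*r^2*s^2 - 3*r^2*s + 2*r*s^2 + 2*r*s - 2*s - 2) r := by
  have h3 : HasDerivAt (fun x : ℝ => x^3) (3*r^2) r := by simpa using hasDerivAt_pow 3 r
  have h2 : HasDerivAt (fun x : ℝ => x^2) (2*r) r := by simpa using hasDerivAt_pow 2 r
  have h1 := hasDerivAt_id' r
  have := ((((((h3.mul_const (s^2)).sub (h3.mul_const s)).add (h2.mul_const (s^2))).add
    (h2.mul_const s)).sub ((h1.const_mul 2).mul_const s)).sub (h1.const_mul 2)).add_const 2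
  exact this.congr_deriv (by ring)

lemma hasDerivAt_f7 (s : ℝ) {r : ℝ} (hr : r < 1) : HasDerivAt (f7 s) (f7Deriv s r) r := by
  have hu : 0 < 1 - r := sub_pos.2 hr
  have hpow : HasDerivAt (fun x => (1-x)^(-s-1)) ((-1) * (-s-1) * (1-r)^(-s-1-1)) r :=
    ((hasDerivAt_id r).const_sub 1).rpow_const (Or.inl hu.ne')
  have hg := ((hpow.mul (hasDerivAt_f7Poly s r)).sub_const 2).congr_of_eventuallyEq
    ((eventually_lt_nhds hr).mono fun x hx => f7_eq_of_lt_one s hx)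
  refine hg.congr_deriv ?_
  have e1 : (1-r)^(-s-1-1) = ((1-r)^(s+2))⁻¹ := by
    rw [← rpow_neg hu.le]; ring_nf
  have e2 : (1-r)^(-s-1) = (1-r) * (1-r)^(-s-1-1) := by
    rw [mul_comm, ← rpow_add_one hu.ne', sub_add_cancel]
  rw [e2, e1, f7Deriv, f7Poly]
  field_simp
  ring

lemma f7Deriv_nonpos {s r : ℝ} (hs0 : 0 ≤ s) (hs1 : s ≤ 1) (hr : r ≤ 1) : f7Deriv s r ≤ 0 := by
  have hlin : 0 < r*s - 2*r + s + 4 := by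
    nlinarith [mul_nonneg (sub_nonneg.2 hr) (by linarith : (0:ℝ) ≤ 2 - s)]
  have : 0 ≤ r^2*(1-s)*s*(r*s - 2*r + s + 4) := by
    have := sub_nonneg.2 hs1; positivity
  exact div_nonpos_of_nonpos_of_nonneg (by linarith) (rpow_nonneg (by linarith) _)

lemma f7_zero (s : ℝ) : f7 s 0 = 0 := by simp [f7]

lemma tendsto_f7_nhdsGT_zero (s : ℝ) : Tendsto (f7 s) (nhdsWithin 0 (Ioi 0)) (nhds 0) := by
  have := (hasDerivAt_f7 s one_pos).continuousAt.tendsto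
  rw [f7_zero] at this
  exact this.mono_left nhdsWithin_le_nhds

lemma antitoneOn_f7 {s : ℝ} (hs0 : 0 ≤ s) (hs1 : s ≤ 1) : AntitoneOn (f7 s) (Iio 1) := by
  refine antitoneOn_of_deriv_nonpos (convex_Iio 1)
    (fun x hx => (hasDerivAt_f7 s hx).continuousAt.continuousWithinAt) ?_ ?_ <;>
    rw [interior_Iio] <;> intro x hx
  · exact (hasDerivAt_f7 s hx).differentiableAt.differentiableWithinAt
  · rw [(hasDerivAt_f7 s hx).deriv]
    exact f7Deriv_nonpos hs0 hs1 hx.le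

lemma f7_nonpos {s r : ℝ} (hs0 : 0 ≤ s) (hs1 : s ≤ 1) (hr0 : 0 ≤ r) (hr1 : r < 1) :
    f7 s r ≤ 0 :=
  f7_zero s ▸ antitoneOn_f7 hs0 hs1 (mem_Iio.2 one_pos) hr1 hr0

theorem stmt12 (s : ℝ) (hs0 : 0 < s) (hs1 : s < 1) :
    (∀ r ∈ Ioo (0:ℝ) 1,
      HasDerivAt (fun r : ℝ => (1-r)^(-s-1) *
          (r^3*s^2 - r^3*s + r^2*s^2 + r^2*s + 2*r*(1-r)^s - 2*(1-r)^s - 2*r*s - 2*r + 2))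
        (r^2*(s-1)*s*(r*s - 2*r + s + 4)/(1-r)^(s+2)) r ∧
      r^2*(s-1)*s*(r*s - 2*r + s + 4)/(1-r)^(s+2) ≤ 0) ∧
    Tendsto (fun r : ℝ => (1-r)^(-s-1) *
        (r^3*s^2 - r^3*s + r^2*s^2 + r^2*s + 2*r*(1-r)^s - 2*(1-r)^s - 2*r*s - 2*r + 2))
      (nhdsWithin 0 (Ioi 0)) (nhds 0) ∧
    ∀ r ∈ Ioo (0:ℝ) 1,
      (1-r)^(-s-1) *
        (r^3*s^2 - r^3*s + r^2*s^2 + r^2*s + 2*r*(1-r)^s - 2*(1-r)^s - 2*r*s - 2*r + 2) ≤ 0 :=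
  ⟨fun r hr => ⟨hasDerivAt_f7 s hr.2, f7Deriv_nonpos hs0.le hs1.le hr.2.le⟩,
    tendsto_f7_nhdsGT_zero s, fun r hr => f7_nonpos hs0.le hs1.le hr.1.le hr.2⟩
end

section
/- Let 0 < s ≤ 1 and let g be analytic and locally univalent on the unit disk with g(0)=0, g'(0)=1, and 1 + z g''(z)/g'(z) subordinate to 1/(1-z)^s. Then the pre-Schwarzian norm satisfies ‖P_g‖ ≤ 2 when s = 1, and ‖P_g‖ ≤ ((1+r_s)(1-r_s)^{1-s} - (1-r_s^2))/r_s when 0 < s < 1, where r_s is the unique root in (0,1) of r^2(1-r)^s + r^2 s - r^2 + (1-r)^s + r s - 1 = 0. Moreover these bounds are sharp. -/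
/-!
By Schwarz's lemma the subordinating function satisfies `|ω z| ≤ |z|`, and comparing the
derivative of `t ↦ (1 - t w)^(-s)` with that of `t ↦ (1 - t |w|)^(-s)` on `[0, 1]` gives
`|(1 - w)^(-s) - 1| ≤ (1 - |w|)^(-s) - 1`. Hence `(1 - |z|²) |g''/g'| ≤ h(|z|)` with
`h(r) = (1 - r²) ((1 - r)^(-s) - 1) / r`, and `f₂`, whose pre-Schwarzian is
`((1 - z)^(-s) - 1) / z`, attains `h(r)` at every `r ∈ (0, 1)`. So the sharp bound is `sup h`. For `s = 1`, `h(r) = 1 + r`.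
For `s < 1`, `r² h'(r) (1 - r)^s` is the function whose unique root is `r_s`; it vanishes to
second order at `0` with positive second derivative and is negative at `1`, so `h` increases
up to `r_s` and decreases after it.
-/

open Real Set Metric

/-- The class `C_hyp`: analytic locally univalent `g` on the unit disk, normalized,
with `1 + z g''/g'` subordinate to `1/(1-z)^s`. -/
def CHyp (s : ℝ) (g : ℂ → ℂ) : Prop :=
  DifferentiableOn ℂ g (ball 0 1) ∧ g 0 = 0 ∧ deriv g 0 = 1 ∧
  (∀ z ∈ ball (0:ℂ) 1, deriv g z ≠ 0) ∧
  ∃ ω : ℂ → ℂ, DifferentiableOn ℂ ω (ball 0 1) ∧ ω 0 = 0 ∧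
    (∀ z ∈ ball (0:ℂ) 1, ‖ω z‖ < 1) ∧
    ∀ z ∈ ball (0:ℂ) 1,
      1 + z * deriv (deriv g) z / deriv g z = (1 - ω z) ^ (-((s:ℂ)))

/-- The set of values `(1-|z|²)|g''(z)/g'(z)|`, whose supremum is the pre-Schwarzian norm. -/
def preSchwarzianSet (g : ℂ → ℂ) : Set ℝ :=
  {x | ∃ z ∈ ball (0:ℂ) 1, x = (1 - ‖z‖^2) * ‖deriv (deriv g) z / deriv g z‖}

lemma strictMonoOn_of_hasDerivAt_pos {D : Set ℝ} (hD : Convex ℝ D) {f f' : ℝ → ℝ}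
    (hf : ∀ x ∈ D, HasDerivAt f (f' x) x) (hf' : ∀ x ∈ interior D, 0 < f' x) :
    StrictMonoOn f D :=
  strictMonoOn_of_hasDerivWithinAt_pos hD (fun x hx ↦ (hf x hx).continuousAt.continuousWithinAt)
    (fun x hx ↦ (hf x (interior_subset hx)).hasDerivWithinAt) hf'

lemma strictAntiOn_of_hasDerivAt_neg {D : Set ℝ} (hD : Convex ℝ D) {f f' : ℝ → ℝ}
    (hf : ∀ x ∈ D, HasDerivAt f (f' x) x) (hf' : ∀ x ∈ interior D, f' x < 0) :
    StrictAntiOn f D :=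
  strictAntiOn_of_hasDerivWithinAt_neg hD (fun x hx ↦ (hf x hx).continuousAt.continuousWithinAt)
    (fun x hx ↦ (hf x (interior_subset hx)).hasDerivWithinAt) hf'

lemma IsPreconnected.pos_of_pos {S : Set ℝ} (hS : IsPreconnected S) {f : ℝ → ℝ}
    (hf : ContinuousOn f S) (hne : ∀ x ∈ S, f x ≠ 0) {a : ℝ} (ha : a ∈ S) (hfa : 0 < f a) :
    ∀ x ∈ S, 0 < f x := by
  intro x hx
  by_contra! hfx
  obtain ⟨c, hc, hfc⟩ := hS.intermediate_value hx ha hf ⟨hfx, hfa.le⟩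
  exact hne c hc hfc

lemma hasDerivAt_one_sub_rpow_s14 (c : ℝ) {r : ℝ} (hr : r < 1) :
    HasDerivAt (fun x : ℝ ↦ (1 - x) ^ c) (-(c * (1 - r) ^ (c - 1))) r := by
  simpa using ((hasDerivAt_id r).const_sub 1).rpow_const (p := c) (Or.inl (sub_pos.2 hr).ne')

noncomputable def extremalValue (s r : ℝ) : ℝ := (1 - r ^ 2) * ((1 - r) ^ (-s) - 1) / r

noncomputable def extremalValueDerivNum (s r : ℝ) : ℝ :=
  r^2*(1-r)^s + r^2*s - r^2 + (1-r)^s + r*s - 1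

lemma hasDerivAt_extremalValue {s r : ℝ} (hr : r ∈ Ioo (0 : ℝ) 1) :
    HasDerivAt (extremalValue s) (extremalValueDerivNum s r * (1 - r) ^ (-s) / r ^ 2) r := by
  obtain ⟨hr0, hr1⟩ := hr
  have h1r : 0 < 1 - r := sub_pos.2 hr1
  have h := (((hasDerivAt_pow 2 r).const_sub 1).mul
    ((hasDerivAt_one_sub_rpow_s14 (-s) hr1).sub_const 1)).div (hasDerivAt_id' r) hr0.ne'
  refine h.congr_deriv ?_
  have hneg : (1 - r) ^ (-s - 1) = ((1 - r) ^ s)⁻¹ / (1 - r) := by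
    rw [rpow_sub h1r, rpow_one, rpow_neg h1r.le]
  simp only [Pi.mul_apply]
  rw [hneg, rpow_neg h1r.le, extremalValueDerivNum]
  field_simp
  ring

lemma hasDerivAt_extremalValueDerivNum {s r : ℝ} (hr : r < 1) :
    HasDerivAt (extremalValueDerivNum s)
      (2*r*(1-r)^s - s*(1+r^2)*(1-r)^(s-1) + (2*r+1)*s - 2*r) r := by
  have hp := hasDerivAt_pow 2 r
  have hb := hasDerivAt_one_sub_rpow_s14 s hr
  have h := ((((hp.mul hb).add (hp.mul_const s)).sub hp).add hb).add
    ((hasDerivAt_id' r).mul_const s) |>.sub_const 1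
  refine h.congr_deriv ?_
  push_cast
  ring

lemma hasDerivAt_extremalValueDerivNum_deriv {s r : ℝ} (hr : r < 1) :
    HasDerivAt (fun r : ℝ ↦ 2*r*(1-r)^s - s*(1+r^2)*(1-r)^(s-1) + (2*r+1)*s - 2*r)
      (2*(1-r)^s - 4*r*s*(1-r)^(s-1) + s*(s-1)*(1+r^2)*(1-r)^(s-2) + 2*s - 2) r := by
  have hi := hasDerivAt_id' r
  have h := (((((hi.const_mul 2).mul (hasDerivAt_one_sub_rpow_s14 s hr)).sub
    ((((hasDerivAt_pow 2 r).const_add 1).const_mul s).mul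
      (hasDerivAt_one_sub_rpow_s14 (s - 1) hr))).add (((hi.const_mul 2).add_const 1).mul_const s)).sub
    (hi.const_mul 2))
  refine h.congr_deriv ?_
  rw [show s - 1 - 1 = s - 2 by ring]
  push_cast
  ring

lemma extremalValueDerivNum_second_deriv_pos {s r : ℝ} (hs0 : 0 < s) (hs1 : s ≤ 1)
    (hr : r ∈ Ioo 0 (s / 4)) :
    0 < 2*(1-r)^s - 4*r*s*(1-r)^(s-1) + s*(s-1)*(1+r^2)*(1-r)^(s-2) + 2*s - 2 := by
  obtain ⟨hr0, hr4⟩ := hr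
  have h1r : 0 < 1 - r := by linarith
  set u := (1 - r) ^ (s - 2)
  have hu : 1 ≤ u := one_le_rpow_of_pos_of_le_one_of_nonpos h1r (by linarith) (by linarith)
  have hs : (1 - r) ^ s = u * (1 - r) ^ 2 := by
    rw [← rpow_natCast, ← rpow_add h1r]; norm_num
  have hs' : (1 - r) ^ (s - 1) = u * (1 - r) := by
    rw [← rpow_add_one h1r.ne']; ring_nf
  have hQ : 0 < s - 4 * r + (2 + s) * r ^ 2 := by nlinarith
  have hP : 0 < 2*(1-r)^2 - 4*r*s*(1-r) - s*(1-s)*(1+r^2) := by nlinarith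
  rw [hs, hs']
  nlinarith [mul_le_mul_of_nonneg_right hu hP.le]

lemma extremalValueDerivNum_pos_of_lt_div_four {s r : ℝ} (hs0 : 0 < s) (hs1 : s ≤ 1)
    (hr : r ∈ Ioo 0 (s / 4)) : 0 < extremalValueDerivNum s r := by
  have hlt : ∀ x ∈ Ico 0 (s / 4), x < 1 := fun x hx ↦ by linarith [hx.2]
  have hmono' := strictMonoOn_of_hasDerivAt_pos (convex_Ico 0 (s / 4))
    (fun x hx ↦ hasDerivAt_extremalValueDerivNum_deriv (hlt x hx))
    (by rw [interior_Ico]; exact fun x hx ↦ extremalValueDerivNum_second_deriv_pos hs0 hs1 hx)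
  have hmono := strictMonoOn_of_hasDerivAt_pos (convex_Ico 0 (s / 4))
    (fun x hx ↦ hasDerivAt_extremalValueDerivNum (hlt x hx)) (by
      rw [interior_Ico]
      intro x hx
      simpa using hmono' ⟨le_rfl, by linarith⟩ ⟨hx.1.le, hx.2⟩ hx.1)
  simpa [extremalValueDerivNum] using hmono ⟨le_rfl, by linarith⟩ ⟨hr.1.le, hr.2⟩ hr.1

lemma continuous_extremalValueDerivNum {s : ℝ} (hs0 : 0 < s) :
    Continuous (extremalValueDerivNum s) := by
  have h : Continuous fun r : ℝ ↦ (1 - r) ^ s :=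
    (continuous_const.sub continuous_id).rpow_const fun _ ↦ Or.inr hs0.le
  unfold extremalValueDerivNum
  fun_prop

lemma extremalValueDerivNum_pos_of_lt_root {s rs : ℝ} (hs0 : 0 < s) (hs1 : s ≤ 1)
    (hrs : rs ∈ Ioo (0 : ℝ) 1)
    (huniq : ∀ t ∈ Ioo (0 : ℝ) 1, extremalValueDerivNum s t = 0 → t = rs) :
    ∀ r ∈ Ioo 0 rs, 0 < extremalValueDerivNum s r := by
  obtain ⟨r₀, hr₀, hr₀'⟩ := exists_between (lt_min hrs.1 (by positivity : 0 < s / 4))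
  rw [lt_min_iff] at hr₀'
  exact isPreconnected_Ioo.pos_of_pos (continuous_extremalValueDerivNum hs0).continuousOn
    (fun t ht h ↦ ht.2.ne (huniq t ⟨ht.1, ht.2.trans hrs.2⟩ h)) ⟨hr₀, hr₀'.1⟩
    (extremalValueDerivNum_pos_of_lt_div_four hs0 hs1 ⟨hr₀, hr₀'.2⟩)

lemma extremalValueDerivNum_neg_of_root_lt {s rs : ℝ} (hs0 : 0 < s) (hs1 : s < 1)
    (hrs : rs ∈ Ioo (0 : ℝ) 1)
    (huniq : ∀ t ∈ Ioo (0 : ℝ) 1, extremalValueDerivNum s t = 0 → t = rs) :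
    ∀ r ∈ Ioc rs 1, extremalValueDerivNum s r < 0 := by
  have h1 : extremalValueDerivNum s 1 = 2 * s - 2 := by
    simp [extremalValueDerivNum, zero_rpow hs0.ne']; ring
  have hne : ∀ t ∈ Ioc rs 1, -extremalValueDerivNum s t ≠ 0 := by
    rintro t ⟨hrt, ht1⟩ h
    rcases ht1.lt_or_eq with ht1 | rfl
    · exact hrt.ne' (huniq t ⟨hrs.1.trans hrt, ht1⟩ (neg_eq_zero.1 h))
    · linarith
  intro r hr
  simpa using isPreconnected_Ioc.pos_of_pos (continuous_extremalValueDerivNum hs0).neg.continuousOn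
    hne ⟨hrs.2, le_rfl⟩ (by rw [Pi.neg_apply, h1]; linarith) r hr

lemma isGreatest_extremalValue {s rs : ℝ} (hs0 : 0 < s) (hs1 : s < 1)
    (hrs : rs ∈ Ioo (0 : ℝ) 1)
    (huniq : ∀ t ∈ Ioo (0 : ℝ) 1, extremalValueDerivNum s t = 0 → t = rs) :
    IsGreatest (extremalValue s '' Ioo 0 1) (extremalValue s rs) := by
  have hpow : ∀ x ∈ Ioo (0 : ℝ) 1, 0 < (1 - x) ^ (-s) / x ^ 2 := fun x hx ↦
    div_pos (rpow_pos_of_pos (sub_pos.2 hx.2) _) (pow_pos hx.1 2)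
  have hmono : StrictMonoOn (extremalValue s) (Ioc 0 rs) :=
    strictMonoOn_of_hasDerivAt_pos (convex_Ioc 0 rs)
      (fun x hx ↦ hasDerivAt_extremalValue ⟨hx.1, hx.2.trans_lt hrs.2⟩) (by
        rw [interior_Ioc]
        intro x hx
        rw [mul_div_assoc]
        exact mul_pos (extremalValueDerivNum_pos_of_lt_root hs0 hs1.le hrs huniq x hx)
          (hpow x ⟨hx.1, hx.2.trans hrs.2⟩))
  have hanti : StrictAntiOn (extremalValue s) (Ico rs 1) :=
    strictAntiOn_of_hasDerivAt_neg (convex_Ico rs 1)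
      (fun x hx ↦ hasDerivAt_extremalValue ⟨hrs.1.trans_le hx.1, hx.2⟩) (by
        rw [interior_Ico]
        intro x hx
        rw [mul_div_assoc]
        exact mul_neg_of_neg_of_pos
          (extremalValueDerivNum_neg_of_root_lt hs0 hs1 hrs huniq x ⟨hx.1, hx.2.le⟩)
          (hpow x ⟨hrs.1.trans hx.1, hx.2⟩))
  refine ⟨mem_image_of_mem _ hrs, ?_⟩
  rintro _ ⟨r, hr, rfl⟩
  rcases le_total r rs with h | h
  · exact hmono.monotoneOn ⟨hr.1, h⟩ ⟨hrs.1, le_rfl⟩ h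
  · exact hanti.antitoneOn ⟨le_rfl, hrs.2⟩ ⟨h, hr.2⟩ h

lemma isLUB_extremalValue_one : IsLUB (extremalValue 1 '' Ioo 0 1) 2 := by
  have h : EqOn (extremalValue 1) (fun r ↦ 1 + r) (Ioo 0 1) := by
    intro r hr
    have h1r : 1 - r ≠ 0 := (sub_pos.2 hr.2).ne'
    have hr0 : r ≠ 0 := hr.1.ne'
    simp only [extremalValue, rpow_neg_one]
    field_simp
    ring
  rw [h.image_eq, image_const_add_Ioo, add_zero, one_add_one_eq_two]
  exact isLUB_Ioo one_lt_two

lemma extremalValue_eq {s r : ℝ} (hr : r < 1) :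
    extremalValue s r = ((1 + r) * (1 - r) ^ (1 - s) - (1 - r ^ 2)) / r := by
  rw [extremalValue, sub_eq_add_neg (1 : ℝ) s, rpow_add (sub_pos.2 hr), rpow_one]
  ring

lemma Complex.one_sub_mem_slitPlane {z : ℂ} (hz : ‖z‖ < 1) : 1 - z ∈ Complex.slitPlane := by
  simpa [sub_eq_add_neg] using Complex.mem_slitPlane_of_norm_lt_one (z := -z) (by simpa)

lemma norm_one_sub_cpow_neg_sub_one_le {s : ℝ} (hs : 0 ≤ s) {w : ℂ} (hw : ‖w‖ < 1) :
    ‖(1 - w) ^ (-(s : ℂ)) - 1‖ ≤ (1 - ‖w‖) ^ (-s) - 1 := by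
  have hsmall : ∀ t ∈ Icc (0 : ℝ) 1, ‖(t : ℂ) * w‖ = t * ‖w‖ ∧ t * ‖w‖ < 1 := fun t ht ↦
    ⟨by simp [abs_of_nonneg ht.1], by nlinarith [norm_nonneg w, ht.1, ht.2]⟩
  have hf : ∀ t ∈ Icc (0 : ℝ) 1, HasDerivAt (fun t : ℝ ↦ (1 - (t : ℂ) * w) ^ (-(s : ℂ)) - 1)
      (s * w * (1 - t * w) ^ ((-s - 1 : ℝ) : ℂ)) t := by
    intro t ht
    obtain ⟨hnorm, hlt⟩ := hsmall t ht
    have h := ((((hasDerivAt_id' (t : ℂ)).mul_const w).const_sub 1).cpow_const (c := -(s : ℂ))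
      (Complex.one_sub_mem_slitPlane (hnorm ▸ hlt))).comp_ofReal
    refine (h.sub_const 1).congr_deriv ?_
    push_cast
    ring
  have hB : ∀ t ∈ Icc (0 : ℝ) 1, HasDerivAt (fun t : ℝ ↦ (1 - t * ‖w‖) ^ (-s) - 1)
      (s * ‖w‖ * (1 - t * ‖w‖) ^ (-s - 1)) t := by
    intro t ht
    have h := (((hasDerivAt_id' t).mul_const ‖w‖).const_sub 1).rpow_const (p := -s)
      (Or.inl (sub_pos.2 (hsmall t ht).2).ne')
    refine (h.sub_const 1).congr_deriv ?_
    ring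
  have hbound : ∀ t ∈ Ico (0 : ℝ) 1,
      ‖s * w * (1 - t * w) ^ ((-s - 1 : ℝ) : ℂ)‖ ≤ s * ‖w‖ * (1 - t * ‖w‖) ^ (-s - 1) := by
    intro t ht
    obtain ⟨hnorm, hlt⟩ := hsmall t (Ico_subset_Icc_self ht)
    have hle : 1 - t * ‖w‖ ≤ ‖1 - (t : ℂ) * w‖ := by
      simpa only [norm_one, hnorm] using norm_sub_norm_le (1 : ℂ) (t * w)
    rw [norm_mul, norm_mul, Complex.norm_cpow_real, Complex.norm_real, Real.norm_of_nonneg hs]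
    exact mul_le_mul_of_nonneg_left
      (rpow_le_rpow_of_nonpos (sub_pos.2 hlt) hle (by linarith)) (by positivity)
  simpa using image_norm_le_of_norm_deriv_right_le_deriv_boundary'
    (fun t ht ↦ (hf t ht).continuousAt.continuousWithinAt)
    (fun t ht ↦ (hf t (Ico_subset_Icc_self ht)).hasDerivWithinAt) (by simp)
    (fun t ht ↦ (hB t ht).continuousAt.continuousWithinAt)
    (fun t ht ↦ (hB t (Ico_subset_Icc_self ht)).hasDerivWithinAt) hbound
    (right_mem_Icc.2 zero_le_one)

lemma CHyp.norm_mul_le {s : ℝ} (hs : 0 ≤ s) {g : ℂ → ℂ} (hg : CHyp s g) {z : ℂ}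
    (hz : z ∈ ball (0 : ℂ) 1) :
    ‖z‖ * ‖deriv (deriv g) z / deriv g z‖ ≤ (1 - ‖z‖) ^ (-s) - 1 := by
  obtain ⟨-, -, -, -, ω, hωd, hω0, hω1, hsub⟩ := hg
  have hschwarz : ‖ω z‖ ≤ ‖z‖ := Complex.norm_le_norm_of_mapsTo_ball hωd
    (fun w hw ↦ mem_closedBall_zero_iff.2 (hω1 w hw).le) hω0 (mem_ball_zero_iff.1 hz)
  have hz1 : ‖z‖ < 1 := mem_ball_zero_iff.1 hz
  calc ‖z‖ * ‖deriv (deriv g) z / deriv g z‖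
      = ‖(1 - ω z) ^ (-(s : ℂ)) - 1‖ := by
        rw [← norm_mul, ← hsub z hz, mul_div_assoc, add_sub_cancel_left]
    _ ≤ (1 - ‖ω z‖) ^ (-s) - 1 := norm_one_sub_cpow_neg_sub_one_le hs (hω1 z hz)
    _ ≤ (1 - ‖z‖) ^ (-s) - 1 := sub_le_sub_right
        (rpow_le_rpow_of_nonpos (sub_pos.2 hz1) (sub_le_sub_left hschwarz 1) (neg_nonpos.2 hs)) 1

lemma CHyp.le_extremalValue {s : ℝ} (hs : 0 ≤ s) {g : ℂ → ℂ} (hg : CHyp s g) {z : ℂ}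
    (hz : z ∈ ball (0 : ℂ) 1) (hz0 : z ≠ 0) :
    (1 - ‖z‖ ^ 2) * ‖deriv (deriv g) z / deriv g z‖ ≤ extremalValue s ‖z‖ := by
  have hz1 : ‖z‖ < 1 := mem_ball_zero_iff.1 hz
  have hpos : 0 < ‖z‖ := norm_pos_iff.2 hz0
  rw [extremalValue, mul_div_assoc]
  gcongr
  · nlinarith
  · rw [le_div_iff₀ hpos, mul_comm]; exact hg.norm_mul_le hs hz

lemma CHyp.le_of_forall_extremalValue_le {s : ℝ} (hs : 0 ≤ s) {g : ℂ → ℂ} (hg : CHyp s g)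
    {M : ℝ} (hM : ∀ r ∈ Ioo (0 : ℝ) 1, extremalValue s r ≤ M) :
    ∀ x ∈ preSchwarzianSet g, x ≤ M := by
  have hle : ∀ z ∈ ball (0 : ℂ) 1, z ≠ 0 →
      (1 - ‖z‖ ^ 2) * ‖deriv (deriv g) z / deriv g z‖ ≤ M := fun z hz hz0 ↦
    (hg.le_extremalValue hs hz hz0).trans
      (hM _ ⟨norm_pos_iff.2 hz0, mem_ball_zero_iff.1 hz⟩)
  rintro x ⟨z, hz, rfl⟩
  rcases ne_or_eq z 0 with hz0 | rfl
  · exact hle z hz hz0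
  -- `extremalValue s 0` is a junk value, so the origin is reached by continuity
  have hd : AnalyticOnNhd ℂ g (ball 0 1) := hg.1.analyticOnNhd isOpen_ball
  have h0 : (0 : ℂ) ∈ ball (0 : ℂ) 1 := mem_ball_self one_pos
  have hA : ContinuousAt (fun z ↦ deriv (deriv g) z / deriv g z) 0 :=
    (hd.deriv.deriv 0 h0).continuousAt.div (hd.deriv 0 h0).continuousAt
      (by rw [hg.2.2.1]; exact one_ne_zero)
  have hcont : ContinuousAt
      (fun z : ℂ ↦ (1 - ‖z‖ ^ 2) * ‖deriv (deriv g) z / deriv g z‖) 0 :=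
    (continuousAt_const.sub (continuous_norm.continuousAt.pow 2)).mul hA.norm
  refine le_of_tendsto (hcont.tendsto.mono_left (nhdsWithin_le_nhds (s := {0}ᶜ))) ?_
  filter_upwards [self_mem_nhdsWithin, mem_nhdsWithin_of_mem_nhds (ball_mem_nhds 0 one_pos)]
    with z hz0 hz using hle z hz hz0

lemma exists_deriv_deriv_div_deriv_eq {q : ℂ → ℂ} (hq : DifferentiableOn ℂ q (ball 0 1)) :
    ∃ g : ℂ → ℂ, DifferentiableOn ℂ g (ball 0 1) ∧ g 0 = 0 ∧ deriv g 0 = 1 ∧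
      ∀ z ∈ ball (0 : ℂ) 1, deriv g z ≠ 0 ∧ deriv (deriv g) z / deriv g z = q z := by
  obtain ⟨Q, hQ0, hQ⟩ := hq.isExactOn_ball.with_val_at 0 0
  have hexpQ : ∀ z ∈ ball (0 : ℂ) 1, HasDerivAt (fun z ↦ Complex.exp (Q z))
      (Complex.exp (Q z) * q z) z := fun z hz ↦ (hQ z hz).cexp
  obtain ⟨g, hg0, hg⟩ := DifferentiableOn.isExactOn_ball
    (fun z hz ↦ (hexpQ z hz).differentiableAt.differentiableWithinAt) |>.with_val_at 0 0
  have hg' : ∀ z ∈ ball (0 : ℂ) 1, deriv g z = Complex.exp (Q z) := fun z hz ↦ (hg z hz).deriv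
  have hg'' : ∀ z ∈ ball (0 : ℂ) 1, deriv (deriv g) z = Complex.exp (Q z) * q z := fun z hz ↦ by
    rw [(Filter.eventuallyEq_of_mem (isOpen_ball.mem_nhds hz) hg').deriv_eq, (hexpQ z hz).deriv]
  have h0 : (0 : ℂ) ∈ ball (0 : ℂ) 1 := mem_ball_self one_pos
  refine ⟨g, fun z hz ↦ (hg z hz).differentiableAt.differentiableWithinAt, hg0,
    by rw [hg' 0 h0, hQ0, Complex.exp_zero], fun z hz ↦ ⟨?_, ?_⟩⟩
  · rw [hg' z hz]; exact Complex.exp_ne_zero _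
  · rw [hg'' z hz, hg' z hz, mul_div_cancel_left₀ _ (Complex.exp_ne_zero _)]

lemma exists_CHyp_extremalValue_mem {s : ℝ} (hs : 0 ≤ s) :
    ∃ g : ℂ → ℂ, CHyp s g ∧ ∀ r ∈ Ioo (0 : ℝ) 1, extremalValue s r ∈ preSchwarzianSet g := by
  set b : ℂ → ℂ := fun z ↦ (1 - z) ^ (-(s : ℂ))
  have hb : DifferentiableOn ℂ b (ball 0 1) := fun z hz ↦
    (((hasDerivAt_id' z).const_sub 1).cpow_const
        (Complex.one_sub_mem_slitPlane (mem_ball_zero_iff.1 hz))).differentiableAt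
      |>.differentiableWithinAt
  have hq : ∀ z, z * dslope b 0 z = b z - 1 := fun z ↦ by
    simpa [b] using sub_smul_dslope b 0 z
  obtain ⟨g, hgd, hg0, hg'0, hg⟩ := exists_deriv_deriv_div_deriv_eq
    ((Complex.differentiableOn_dslope (ball_mem_nhds 0 one_pos)).2 hb)
  refine ⟨g, ⟨hgd, hg0, hg'0, fun z hz ↦ (hg z hz).1, id, differentiableOn_id, rfl,
    fun z hz ↦ mem_ball_zero_iff.1 hz, fun z hz ↦ ?_⟩, fun r hr ↦ ?_⟩
  · rw [mul_div_assoc, (hg z hz).2, hq, add_sub_cancel, id]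
  · have hr' : (r : ℂ) ∈ ball (0 : ℂ) 1 := by simpa [abs_of_pos hr.1] using hr.2
    refine ⟨r, hr', ?_⟩
    have hbr : b r - 1 = (((1 - r) ^ (-s) - 1 : ℝ) : ℂ) := by
      rw [Complex.ofReal_sub, Complex.ofReal_cpow (sub_pos.2 hr.2).le]
      push_cast
      rfl
    have hqr : dslope b 0 r = (((1 - r) ^ (-s) - 1) / r : ℝ) := by
      rw [Complex.ofReal_div, ← hbr, ← hq, mul_div_cancel_left₀ _ (by exact_mod_cast hr.1.ne')]
    have hnonneg : 0 ≤ ((1 - r) ^ (-s) - 1) / r := div_nonneg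
      (sub_nonneg.2 (one_le_rpow_of_pos_of_le_one_of_nonpos (sub_pos.2 hr.2) (by linarith [hr.1])
        (neg_nonpos.2 hs))) hr.1.le
    rw [(hg r hr').2, hqr, Complex.norm_real, Complex.norm_real, Real.norm_of_nonneg hnonneg,
      Real.norm_of_nonneg hr.1.le, extremalValue, mul_div_assoc]

theorem CHyp.sharp_bound {s M : ℝ} (hs : 0 ≤ s) (hM : IsLUB (extremalValue s '' Ioo 0 1) M) :
    (∀ g : ℂ → ℂ, CHyp s g → ∀ x ∈ preSchwarzianSet g, x ≤ M) ∧
      ∃ g : ℂ → ℂ, CHyp s g ∧ sSup (preSchwarzianSet g) = M := by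
  have hle : ∀ g : ℂ → ℂ, CHyp s g → ∀ x ∈ preSchwarzianSet g, x ≤ M := fun g hg ↦
    hg.le_of_forall_extremalValue_le hs fun r hr ↦ hM.1 (mem_image_of_mem _ hr)
  obtain ⟨g, hg, hmem⟩ := exists_CHyp_extremalValue_mem hs
  have hsub : extremalValue s '' Ioo 0 1 ⊆ preSchwarzianSet g := by
    rintro _ ⟨r, hr, rfl⟩
    exact hmem r hr
  refine ⟨hle, g, hg, IsLUB.csSup_eq ⟨hle g hg, fun b hb ↦ hM.2 (upperBounds_mono_set hsub hb)⟩ ?_⟩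
  exact ((nonempty_Ioo.2 zero_lt_one).image _).mono hsub

theorem stmt14_general (s : ℝ) (hs0 : 0 < s) :
    (s = 1 →
      (∀ g : ℂ → ℂ, CHyp s g → ∀ x ∈ preSchwarzianSet g, x ≤ 2) ∧
      (∃ g : ℂ → ℂ, CHyp s g ∧ sSup (preSchwarzianSet g) = 2)) ∧
    (s < 1 → ∀ rs : ℝ, rs ∈ Ioo (0:ℝ) 1 →
      rs^2*(1-rs)^s + rs^2*s - rs^2 + (1-rs)^s + rs*s - 1 = 0 →
      (∀ t ∈ Ioo (0:ℝ) 1,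
        t^2*(1-t)^s + t^2*s - t^2 + (1-t)^s + t*s - 1 = 0 → t = rs) →
      (∀ g : ℂ → ℂ, CHyp s g → ∀ x ∈ preSchwarzianSet g,
        x ≤ ((1+rs)*(1-rs)^(1-s) - (1-rs^2))/rs) ∧
      (∃ g : ℂ → ℂ, CHyp s g ∧
        sSup (preSchwarzianSet g) = ((1+rs)*(1-rs)^(1-s) - (1-rs^2))/rs)) := by
  refine ⟨?_, fun hs1 rs hrs _ huniq ↦ ?_⟩
  · rintro rfl
    exact CHyp.sharp_bound zero_le_one isLUB_extremalValue_one
  · rw [← extremalValue_eq hrs.2]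
    exact CHyp.sharp_bound hs0.le (isGreatest_extremalValue hs0 hs1 hrs huniq).isLUB

theorem stmt14 (s : ℝ) (hs0 : 0 < s) (hs1 : s ≤ 1) :
    (s = 1 →
      (∀ g : ℂ → ℂ, CHyp s g → ∀ x ∈ preSchwarzianSet g, x ≤ 2) ∧
      (∃ g : ℂ → ℂ, CHyp s g ∧ sSup (preSchwarzianSet g) = 2)) ∧
    (s < 1 → ∀ rs : ℝ, rs ∈ Ioo (0:ℝ) 1 →
      rs^2*(1-rs)^s + rs^2*s - rs^2 + (1-rs)^s + rs*s - 1 = 0 →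
      (∀ t ∈ Ioo (0:ℝ) 1,
        t^2*(1-t)^s + t^2*s - t^2 + (1-t)^s + t*s - 1 = 0 → t = rs) →
      (∀ g : ℂ → ℂ, CHyp s g → ∀ x ∈ preSchwarzianSet g,
        x ≤ ((1+rs)*(1-rs)^(1-s) - (1-rs^2))/rs) ∧
      (∃ g : ℂ → ℂ, CHyp s g ∧
        sSup (preSchwarzianSet g) = ((1+rs)*(1-rs)^(1-s) - (1-rs^2))/rs)) :=
  stmt14_general s hs0
end

section
/- Let 0 < s ≤ 1/√2 and let g be analytic and locally univalent on the unit disk with g(0)=0, g'(0)=1, and 1 + z g''(z)/g'(z) subordinate to (1+sz)^2. Then the pre-Schwarzian norm satisfies ‖P_g‖ ≤ 2(√(3s^2+4)+4)(3s^2 + 2√(3s^2+4) - 4)/(27s), and this bound is sharp. -/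
open Real Set Metric

/-- The class `C_L`: analytic locally univalent `g` on the unit disk, normalized,
with `1 + z g''/g'` subordinate to `(1+sz)²`. -/
def CLclass (s : ℝ) (g : ℂ → ℂ) : Prop :=
  DifferentiableOn ℂ g (ball 0 1) ∧ g 0 = 0 ∧ deriv g 0 = 1 ∧
  (∀ z ∈ ball (0:ℂ) 1, deriv g z ≠ 0) ∧
  ∃ ω : ℂ → ℂ, DifferentiableOn ℂ ω (ball 0 1) ∧ ω 0 = 0 ∧
    (∀ z ∈ ball (0:ℂ) 1, ‖ω z‖ < 1) ∧
    ∀ z ∈ ball (0:ℂ) 1,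
      1 + z * deriv (deriv g) z / deriv g z = (1 + (s:ℂ) * ω z)^2

/-!
Writing `z g''/g' = s ω (2 + s ω)` and using the Schwarz lemma `|ω(z)| ≤ |z|` gives
`|g''/g'(z)| ≤ s (2 + s |z|)`, so `(1 - |z|²)|g''/g'(z)| ≤ φ(|z|)` with
`φ(r) = (1 - r²) s (2 + s r)`. With `t = √(3s² + 4)` one has the factorization
`2(t + 4)(3s² + 2t - 4) - 27 s φ(r) = (3sr - t + 2)² (3sr + 2t + 2)`,
so `max_{[0,1)} φ` is the stated bound, attained at `r₀ = (t - 2)/(3s)`.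
The extremal function `g' = exp(2sz + s²z²/2)` has `g''/g' = 2s + s²z`, i.e. `ω(z) = z`,
and realizes `φ(|z|)` on the positive real axis.
-/

open Filter Topology

noncomputable def preSchwarzianBound (s : ℝ) : ℝ :=
  2*(√(3*s^2 + 4) + 4)*(3*s^2 + 2*√(3*s^2 + 4) - 4)/(27*s)

lemma preSchwarzianBound_sub_eq (s r : ℝ) :
    2*(√(3*s^2 + 4) + 4)*(3*s^2 + 2*√(3*s^2 + 4) - 4) - 27*s^2*((1 - r^2)*(2 + s*r))
      = (3*s*r - √(3*s^2 + 4) + 2)^2 * (3*s*r + 2*√(3*s^2 + 4) + 2) := by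
  have ht : √(3*s^2 + 4) ^ 2 = 3*s^2 + 4 := Real.sq_sqrt (by positivity)
  linear_combination (-2*√(3*s^2 + 4) + 9*s*r + 10) * ht

lemma isGreatest_preSchwarzianBound {s : ℝ} (hs : 0 < s) :
    IsGreatest ((fun r => (1 - r^2) * (s*(2 + s*r))) '' Ico 0 1) (preSchwarzianBound s) := by
  have ht : √(3*s^2 + 4) ^ 2 = 3*s^2 + 4 := Real.sq_sqrt (by positivity)
  have ht2 : 2 ≤ √(3*s^2 + 4) := by nlinarith [Real.sqrt_nonneg (3*s^2 + 4)]
  refine ⟨⟨(√(3*s^2 + 4) - 2)/(3*s), ⟨by positivity, ?_⟩, ?_⟩, ?_⟩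
  · rw [div_lt_one (by positivity)]
    nlinarith
  · have h3sr : 3*s*((√(3*s^2 + 4) - 2)/(3*s)) = √(3*s^2 + 4) - 2 := by field_simp
    have h := preSchwarzianBound_sub_eq s ((√(3*s^2 + 4) - 2)/(3*s))
    rw [h3sr] at h
    rw [preSchwarzianBound, eq_div_iff (by positivity)]
    linear_combination -h
  · rintro _ ⟨r, ⟨hr0, -⟩, rfl⟩
    have h := preSchwarzianBound_sub_eq s r
    have hsq : 0 ≤ (3*s*r - √(3*s^2 + 4) + 2)^2 * (3*s*r + 2*√(3*s^2 + 4) + 2) := by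
      apply mul_nonneg (sq_nonneg _); positivity
    rw [preSchwarzianBound, le_div_iff₀ (by positivity)]
    nlinarith

lemma le_of_eventually_le_nhdsNE {X α : Type*} [TopologicalSpace X] [TopologicalSpace α]
    [Preorder α] [OrderClosedTopology α] {a : X} [(𝓝[≠] a).NeBot] {f g : X → α}
    (hf : ContinuousAt f a) (hg : ContinuousAt g a) (h : ∀ᶠ x in 𝓝[≠] a, f x ≤ g x) :
    f a ≤ g a :=
  le_of_tendsto_of_tendsto (hf.tendsto.mono_left nhdsWithin_le_nhds)
    (hg.tendsto.mono_left nhdsWithin_le_nhds) h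

namespace CLclass

variable {s : ℝ} {g : ℂ → ℂ}

lemma norm_deriv_deriv_div_deriv_le_of_ne_zero (hs : 0 ≤ s) (hg : CLclass s g) {z : ℂ}
    (hz : z ∈ ball (0:ℂ) 1) (hz0 : z ≠ 0) :
    ‖deriv (deriv g) z / deriv g z‖ ≤ s * (2 + s * ‖z‖) := by
  obtain ⟨-, -, -, -, ω, hω, hω0, hω1, hsub⟩ := hg
  have hschwarz : ‖ω z‖ ≤ ‖z‖ :=
    Complex.norm_le_norm_of_mapsTo_ball hω
      (fun w hw => mem_closedBall_zero_iff.mpr (hω1 w hw).le) hω0 (mem_ball_zero_iff.mp hz)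
  have hs' : ‖(s:ℂ)‖ = s := by rw [Complex.norm_real, Real.norm_of_nonneg hs]
  have hmul : z * (deriv (deriv g) z / deriv g z) = s * ω z * (2 + s * ω z) := by
    have h := hsub z hz
    rw [mul_div_assoc] at h
    linear_combination h
  have hfac : ‖2 + (s:ℂ) * ω z‖ ≤ 2 + s * ‖z‖ :=
    calc ‖2 + (s:ℂ) * ω z‖ ≤ 2 + s * ‖ω z‖ := by
          simpa [abs_of_nonneg hs] using norm_add_le (2:ℂ) ((s:ℂ) * ω z)
      _ ≤ 2 + s * ‖z‖ := by gcongr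
  have hz' : 0 < ‖z‖ := norm_pos_iff.mpr hz0
  refine le_of_mul_le_mul_left ?_ hz'
  calc ‖z‖ * ‖deriv (deriv g) z / deriv g z‖ = s * ‖ω z‖ * ‖2 + (s:ℂ) * ω z‖ := by
        rw [← norm_mul, hmul, norm_mul, norm_mul, hs']
    _ ≤ s * ‖z‖ * (2 + s * ‖z‖) := by gcongr
    _ = ‖z‖ * (s * (2 + s * ‖z‖)) := by ring

lemma norm_deriv_deriv_div_deriv_le (hs : 0 ≤ s) (hg : CLclass s g) {z : ℂ}
    (hz : z ∈ ball (0:ℂ) 1) :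
    ‖deriv (deriv g) z / deriv g z‖ ≤ s * (2 + s * ‖z‖) := by
  rcases ne_or_eq z 0 with hz0 | rfl
  · exact hg.norm_deriv_deriv_div_deriv_le_of_ne_zero hs hz hz0
  have h0 : (0:ℂ) ∈ ball (0:ℂ) 1 := mem_ball_self one_pos
  have hA : AnalyticOnNhd ℂ g (ball 0 1) := hg.1.analyticOnNhd isOpen_ball
  have hcont : ContinuousAt (fun w => ‖deriv (deriv g) w / deriv g w‖) 0 :=
    ((hA.deriv.deriv 0 h0).continuousAt.div (hA.deriv 0 h0).continuousAt
      (by rw [hg.2.2.1]; exact one_ne_zero)).norm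
  have := NormedField.nhdsNE_neBot (0:ℂ)
  refine le_of_eventually_le_nhdsNE (g := fun w : ℂ => s * (2 + s * ‖w‖)) hcont (by fun_prop) ?_
  filter_upwards [eventually_nhdsWithin_of_eventually_nhds (isOpen_ball.mem_nhds h0),
    self_mem_nhdsWithin] with w hw hw0
  exact hg.norm_deriv_deriv_div_deriv_le_of_ne_zero hs hw hw0

lemma le_preSchwarzianBound (hs : 0 < s) (hg : CLclass s g) {x : ℝ}
    (hx : x ∈ preSchwarzianSet g) : x ≤ preSchwarzianBound s := by
  obtain ⟨z, hz, rfl⟩ := hx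
  have hz1 : ‖z‖ < 1 := mem_ball_zero_iff.mp hz
  calc (1 - ‖z‖^2) * ‖deriv (deriv g) z / deriv g z‖ ≤ (1 - ‖z‖^2) * (s * (2 + s * ‖z‖)) := by
        gcongr
        · nlinarith [norm_nonneg z]
        · exact hg.norm_deriv_deriv_div_deriv_le hs.le hz
    _ ≤ preSchwarzianBound s :=
        (isGreatest_preSchwarzianBound hs).2 ⟨‖z‖, ⟨norm_nonneg z, hz1⟩, rfl⟩

end CLclass

lemma exists_CLclass_deriv_deriv_div_deriv_eq (s : ℝ) :
    ∃ g : ℂ → ℂ, CLclass s g ∧ ∀ z, deriv (deriv g) z / deriv g z = 2*s + s^2*z := by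
  set f : ℂ → ℂ := fun z => Complex.exp (2*s*z + s^2*z^2/2)
  have hf : ∀ z, HasDerivAt f ((2*s + s^2*z) * f z) z := by
    intro z
    have hp : HasDerivAt (fun z : ℂ => 2*s*z + s^2*z^2/2) (2*s + s^2*z) z := by
      refine (((hasDerivAt_id z).const_mul (2*(s:ℂ))).add
        (((hasDerivAt_pow 2 z).const_mul ((s:ℂ)^2)).div_const 2)).congr_deriv ?_
      push_cast
      ring
    exact hp.cexp.congr_deriv (mul_comm _ _)
  obtain ⟨g, hg0, hg⟩ :=
    (Differentiable.isExactOn_univ fun z => (hf z).differentiableAt).with_val_at 0 0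
  have hg' : deriv g = f := funext fun z => (hg z trivial).deriv
  have hratio : ∀ z, deriv (deriv g) z / deriv g z = 2*s + s^2*z := fun z => by
    rw [hg', (hf z).deriv, mul_div_cancel_right₀ _ (Complex.exp_ne_zero _)]
  refine ⟨g, ⟨fun z _ => (hg z trivial).differentiableAt.differentiableWithinAt, hg0,
    by simp [hg', f], fun z _ => by simp [hg', f, Complex.exp_ne_zero],
    id, differentiableOn_id, rfl, fun z hz => mem_ball_zero_iff.mp hz, fun z _ => ?_⟩, hratio⟩
  rw [mul_div_assoc, hratio, id]
  ring

lemma isGreatest_preSchwarzianSet {s : ℝ} (hs : 0 < s) {g : ℂ → ℂ} (hg : CLclass s g)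
    (hratio : ∀ z, deriv (deriv g) z / deriv g z = 2*s + s^2*z) :
    IsGreatest (preSchwarzianSet g) (preSchwarzianBound s) := by
  refine ⟨?_, fun x hx => hg.le_preSchwarzianBound hs hx⟩
  obtain ⟨r, ⟨hr0, hr1⟩, hr⟩ := (isGreatest_preSchwarzianBound hs).1
  refine ⟨r, by simpa [abs_of_nonneg hr0] using hr1, ?_⟩
  have hpos : 0 ≤ s * (2 + s * r) := by positivity
  rw [hratio, ← hr]
  simp only [Complex.norm_real, Real.norm_of_nonneg hr0]
  rw [show 2*(s:ℂ) + (s:ℂ)^2*(r:ℂ) = ((s * (2 + s * r) : ℝ) : ℂ) by push_cast; ring,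
    Complex.norm_real, Real.norm_of_nonneg hpos]

theorem stmt17_general (s : ℝ) (hs0 : 0 < s) :
    (∀ g : ℂ → ℂ, CLclass s g → ∀ x ∈ preSchwarzianSet g,
      x ≤ 2*(Real.sqrt (3*s^2 + 4) + 4)*(3*s^2 + 2*Real.sqrt (3*s^2 + 4) - 4)/(27*s)) ∧
    (∃ g : ℂ → ℂ, CLclass s g ∧
      sSup (preSchwarzianSet g)
        = 2*(Real.sqrt (3*s^2 + 4) + 4)*(3*s^2 + 2*Real.sqrt (3*s^2 + 4) - 4)/(27*s)) := by
  refine ⟨fun g hg x hx => hg.le_preSchwarzianBound hs0 hx, ?_⟩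
  obtain ⟨g, hg, hratio⟩ := exists_CLclass_deriv_deriv_div_deriv_eq s
  exact ⟨g, hg, (isGreatest_preSchwarzianSet hs0 hg hratio).csSup_eq⟩

theorem stmt17 (s : ℝ) (hs0 : 0 < s) (hs1 : s ≤ 1 / Real.sqrt 2) :
    (∀ g : ℂ → ℂ, CLclass s g → ∀ x ∈ preSchwarzianSet g,
      x ≤ 2*(Real.sqrt (3*s^2 + 4) + 4)*(3*s^2 + 2*Real.sqrt (3*s^2 + 4) - 4)/(27*s)) ∧
    (∃ g : ℂ → ℂ, CLclass s g ∧
      sSup (preSchwarzianSet g)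
        = 2*(Real.sqrt (3*s^2 + 4) + 4)*(3*s^2 + 2*Real.sqrt (3*s^2 + 4) - 4)/(27*s)) :=
  stmt17_general s hs0
end

section
/- Let f_3(z) = ∫_0^z exp(2st + (s^2/2) t^2) dt for 0 < s ≤ 1/√2. Then f_3''(z)/f_3'(z) = 2s + s^2 z, and the pre-Schwarzian norm of f_3 equals 2(√(3s^2+4)+4)(3s^2 + 2√(3s^2+4) - 4)/(27s), with the supremum of (1-|z|^2)|2s + s^2 z| over the unit disk attained on the positive real axis. -/
/-!
Since `f₃' = exp (2 s z + s² z² / 2)`, the quotient `f₃'' / f₃'` is the derivative of the exponent,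
`2 s + s² z`. On the disk `‖2 s + s² z‖ ≤ 2 s + s² ‖z‖`, with equality on the positive real axis, so
the pre-Schwarzian norm is the maximum over `0 ≤ r < 1` of the cubic `(1 - r²)(2 s + s² r)`. Its
critical point is `r₀ = (√(3 s² + 4) - 2) / (3 s)`, and the bound by the critical value is an exact
sum-of-squares identity.
-/

open Real Set Metric

theorem deriv_deriv_div_deriv_eq_of_hasDerivAt_cexp {f g g' : ℂ → ℂ}
    (hf : ∀ z, HasDerivAt f (Complex.exp (g z)) z) (hg : ∀ z, HasDerivAt g (g' z) z) (z : ℂ) :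
    deriv (deriv f) z / deriv f z = g' z := by
  have hf' : deriv f = fun w => Complex.exp (g w) := funext fun w => (hf w).deriv
  rw [hf', ((hg z).cexp).deriv]
  exact mul_div_cancel_left₀ _ (Complex.exp_ne_zero _)

theorem hasDerivAt_exponent (s : ℝ) (z : ℂ) :
    HasDerivAt (fun w : ℂ => 2*(s:ℂ)*w + (s:ℂ)^2/2*w^2) (2*(s:ℂ) + (s:ℂ)^2*z) z := by
  have hlin : HasDerivAt (fun w : ℂ => 2*(s:ℂ)*w) (2*(s:ℂ)) z := by
    simpa using (hasDerivAt_id z).const_mul (2*(s:ℂ))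
  have hquad : HasDerivAt (fun w : ℂ => (s:ℂ)^2/2*w^2) ((s:ℂ)^2/2*(2*z)) z := by
    simpa using (hasDerivAt_pow 2 z).const_mul ((s:ℂ)^2/2)
  exact (hlin.add hquad).congr_deriv (by ring)

namespace RadialProfile

def profile (s r : ℝ) : ℝ := (1 - r^2) * (2*s + s^2*r)

noncomputable def argmax (s : ℝ) : ℝ := (Real.sqrt (3*s^2 + 4) - 2) / (3*s)

noncomputable def maxValue (s : ℝ) : ℝ :=
  2*(Real.sqrt (3*s^2 + 4) + 4)*(3*s^2 + 2*Real.sqrt (3*s^2 + 4) - 4)/(27*s)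

variable {s : ℝ}

theorem sq_sqrt_eq (s : ℝ) : Real.sqrt (3*s^2 + 4) ^ 2 = 3*s^2 + 4 :=
  Real.sq_sqrt (by positivity)

theorem two_le_sqrt (s : ℝ) : 2 ≤ Real.sqrt (3*s^2 + 4) :=
  Real.le_sqrt_of_sq_le (by nlinarith [sq_nonneg s])

theorem profile_le_maxValue (hs : 0 < s) {r : ℝ} (hr : 0 ≤ r) : profile s r ≤ maxValue s := by
  have hq := sq_sqrt_eq s
  set q := Real.sqrt (3*s^2 + 4)
  have hq2 : 2 ≤ q := two_le_sqrt s
  -- `r₀ = (q - 2) / (3 s)` is a double root of `maxValue s - profile s r`.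
  have key : 2*(q+4)*(3*s^2+2*q-4) - 27*s*profile s r = (3*s*r-q+2)^2*(3*s*r+2*q+2) := by
    unfold profile
    linear_combination (9*s*r - 2*q + 10) * hq
  have hnonneg : 0 ≤ (3*s*r-q+2)^2*(3*s*r+2*q+2) := by positivity
  unfold maxValue
  rw [le_div_iff₀ (by positivity)]
  linarith

theorem profile_argmax (hs : 0 < s) : profile s (argmax s) = maxValue s := by
  have hq := sq_sqrt_eq s
  unfold profile argmax maxValue
  field_simp
  linear_combination (-27*(Real.sqrt (3*s^2 + 4) + 4)) * hq

theorem argmax_nonneg (hs : 0 < s) : 0 ≤ argmax s :=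
  div_nonneg (by linarith [two_le_sqrt s]) (by positivity)

theorem argmax_lt_one (hs : 0 < s) : argmax s < 1 := by
  have hq := sq_sqrt_eq s
  have hq2 := two_le_sqrt s
  rw [argmax, div_lt_one (by positivity)]
  nlinarith

theorem isGreatest_radial (hs : 0 < s) :
    IsGreatest {x : ℝ | ∃ r : ℝ, 0 ≤ r ∧ r < 1 ∧ x = (1 - r^2) * |2*s + s^2*r|} (maxValue s) := by
  have habs : ∀ r : ℝ, 0 ≤ r → |2*s + s^2*r| = 2*s + s^2*r := fun r hr =>
    abs_of_pos (by positivity)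
  refine ⟨⟨argmax s, argmax_nonneg hs, argmax_lt_one hs, ?_⟩, ?_⟩
  · rw [habs _ (argmax_nonneg hs)]
    exact (profile_argmax hs).symm
  · rintro x ⟨r, hr0, -, rfl⟩
    rw [habs r hr0]
    exact profile_le_maxValue hs hr0

theorem norm_exponent_deriv_le (hs : 0 < s) (z : ℂ) :
    ‖2*(s:ℂ) + (s:ℂ)^2*z‖ ≤ 2*s + s^2*‖z‖ :=
  calc ‖2*(s:ℂ) + (s:ℂ)^2*z‖ ≤ ‖2*(s:ℂ)‖ + ‖(s:ℂ)^2*z‖ := norm_add_le _ _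
    _ = 2*s + s^2*‖z‖ := by
      simp only [norm_mul, norm_pow, Complex.norm_real, Real.norm_eq_abs, abs_of_pos hs,
        Complex.norm_ofNat]

theorem isGreatest_disk (hs : 0 < s) :
    IsGreatest {x : ℝ | ∃ z ∈ ball (0:ℂ) 1, x = (1 - ‖z‖^2) * ‖2*(s:ℂ) + (s:ℂ)^2*z‖}
      (maxValue s) := by
  obtain ⟨⟨r, hr0, hr1, hr⟩, hbound⟩ := isGreatest_radial hs
  refine ⟨⟨r, ?_, ?_⟩, ?_⟩
  · rwa [mem_ball_zero_iff, Complex.norm_real, Real.norm_eq_abs, abs_of_nonneg hr0]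
  · have hcast : ((2*s + s^2*r : ℝ) : ℂ) = 2*(s:ℂ) + (s:ℂ)^2*r := by push_cast; ring
    rw [hr, Complex.norm_real, Real.norm_eq_abs, abs_of_nonneg hr0, ← hcast, Complex.norm_real,
      Real.norm_eq_abs]
  · rintro x ⟨z, hz, rfl⟩
    rw [mem_ball_zero_iff] at hz
    have hz2 : 0 ≤ 1 - ‖z‖^2 := by nlinarith [norm_nonneg z]
    calc (1 - ‖z‖^2) * ‖2*(s:ℂ) + (s:ℂ)^2*z‖ ≤ profile s ‖z‖ :=
          mul_le_mul_of_nonneg_left (norm_exponent_deriv_le hs z) hz2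
      _ ≤ maxValue s := profile_le_maxValue hs (norm_nonneg z)

end RadialProfile

open RadialProfile in
theorem stmt18_general (s : ℝ) (hs0 : 0 < s)
    (f₃ : ℂ → ℂ)
    (hderiv : ∀ z : ℂ, HasDerivAt f₃ (Complex.exp (2*(s:ℂ)*z + (s:ℂ)^2/2*z^2)) z) :
    (∀ z : ℂ, deriv (deriv f₃) z / deriv f₃ z = 2*(s:ℂ) + (s:ℂ)^2*z) ∧
    sSup {x : ℝ | ∃ z ∈ ball (0:ℂ) 1,
        x = (1 - ‖z‖^2) * ‖deriv (deriv f₃) z / deriv f₃ z‖}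
      = 2*(Real.sqrt (3*s^2 + 4) + 4)*(3*s^2 + 2*Real.sqrt (3*s^2 + 4) - 4)/(27*s) ∧
    sSup {x : ℝ | ∃ r : ℝ, 0 ≤ r ∧ r < 1 ∧ x = (1 - r^2) * |2*s + s^2*r|}
      = 2*(Real.sqrt (3*s^2 + 4) + 4)*(3*s^2 + 2*Real.sqrt (3*s^2 + 4) - 4)/(27*s) := by
  have hquot := deriv_deriv_div_deriv_eq_of_hasDerivAt_cexp hderiv (hasDerivAt_exponent s)
  refine ⟨hquot, ?_, (isGreatest_radial hs0).csSup_eq⟩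
  simp only [hquot]
  exact (isGreatest_disk hs0).csSup_eq

theorem stmt18 (s : ℝ) (hs0 : 0 < s) (hs1 : s ≤ 1 / Real.sqrt 2)
    (f₃ : ℂ → ℂ) (hf0 : f₃ 0 = 0)
    (hderiv : ∀ z : ℂ, HasDerivAt f₃ (Complex.exp (2*(s:ℂ)*z + (s:ℂ)^2/2*z^2)) z) :
    (∀ z : ℂ, deriv (deriv f₃) z / deriv f₃ z = 2*(s:ℂ) + (s:ℂ)^2*z) ∧
    sSup {x : ℝ | ∃ z ∈ ball (0:ℂ) 1,
        x = (1 - ‖z‖^2) * ‖deriv (deriv f₃) z / deriv f₃ z‖}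
      = 2*(Real.sqrt (3*s^2 + 4) + 4)*(3*s^2 + 2*Real.sqrt (3*s^2 + 4) - 4)/(27*s) ∧
    sSup {x : ℝ | ∃ r : ℝ, 0 ≤ r ∧ r < 1 ∧ x = (1 - r^2) * |2*s + s^2*r|}
      = 2*(Real.sqrt (3*s^2 + 4) + 4)*(3*s^2 + 2*Real.sqrt (3*s^2 + 4) - 4)/(27*s) :=
  stmt18_general s hs0 f₃ hderiv
end
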